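/- arXiv:2604.06735 — 5 statements merged into one kernel-verified Lean document; each statement's English description precedes it below -/
import Mathlib

section
/- For n >= 1, the number of ascent sequences of length n avoiding the four patterns 0101, 0102, 0112, and 0120 equals 1 + C(n+1, 3). -/
/-- Number of ascents of a sequence (list) of natural numbers. -/
def asc (l : List ℕ) : ℕ :=
  ((List.range (l.length - 1)).filter (fun j => l.getD j 0 < l.getD (j + 1) 0)).length

/-- `x` is an ascent sequence: nonempty, starts with 0, and each later entry is
at most one more than the number of ascents of the preceding prefix. -/
def IsAscSeq (x : List ℕ) : Prop :=
  x ≠ [] ∧ x.getD 0 0 = 0 ∧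
    ∀ i, 1 ≤ i → i < x.length → x.getD i 0 ≤ 1 + asc (x.take i)

/-- `x` contains the pattern `p`: some subsequence of `x` is order-isomorphic
(including equalities) to `p`, i.e. its reduction equals `p`. -/
def Contains (p x : List ℕ) : Prop :=
  ∃ y : List ℕ, y.Sublist x ∧ y.length = p.length ∧
    ∀ i j, i < p.length → j < p.length →
      (y.getD i 0 < y.getD j 0 ↔ p.getD i 0 < p.getD j 0)

/-- `x` avoids the pattern `p`. -/
def Avoids (p x : List ℕ) : Prop := ¬ Contains p x

def vfun (A K M i : ℕ) : ℕ :=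
  if i < A then 0 else if i < A + K then i - A + 1
  else if i < A + K + M then K else K - 1

def canon (A K M T : ℕ) : List ℕ :=
  List.replicate A 0 ++ List.range' 1 K ++ List.replicate M K ++
    List.replicate T (K - 1)

@[simp] lemma length_canon (A K M T : ℕ) : (canon A K M T).length = A + K + M + T := by
  simp [canon]; omega

lemma getElem_canon (A K M T i : ℕ) (h : i < (canon A K M T).length) :
    (canon A K M T)[i] = vfun A K M i := by
  rw [length_canon] at h
  simp only [canon]
  simp only [List.getElem_append, List.length_append, List.length_replicate,
    List.length_range', List.getElem_replicate, List.getElem_range']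
  unfold vfun
  split_ifs <;> omega

lemma getD_canon (A K M T i : ℕ) (h : i < A + K + M + T) :
    (canon A K M T).getD i 0 = vfun A K M i := by
  rw [List.getD_eq_getElem _ _ (by simpa using h), getElem_canon]

lemma take_canon (A K M T i : ℕ) :
    (canon A K M T).take i =
      canon (min A i) (min K (i - A)) (min M (i - A - K)) (min T (i - A - K - M)) := by
  apply List.ext_getElem
  · simp; omega
  · intro j h1 h2
    rw [List.getElem_take, getElem_canon, getElem_canon]
    simp only [List.length_take, length_canon] at h1 ⊢
    unfold vfun
    split_ifs <;> omega

lemma length_filter_range (L a b : ℕ) :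
    (((List.range L).filter (fun j => decide (a ≤ j ∧ j < b))).length) =
      min b L - min a L := by
  induction L with
  | zero => simp
  | succ L ih =>
    rw [List.range_succ, List.filter_append, List.length_append, ih]
    by_cases h : a ≤ L ∧ L < b <;> simp [h] <;> omega
lemma asc_canon (A K M T : ℕ) (hA : 1 ≤ A) :
    asc (canon A K M T) = K := by
  unfold asc
  rw [length_canon]
  have hc : ∀ j ∈ List.range (A + K + M + T - 1),
      (decide ((canon A K M T).getD j 0 < (canon A K M T).getD (j+1) 0)) =
      (decide (A - 1 ≤ j ∧ j < A + K - 1)) := by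
    intro j hj
    rw [List.mem_range] at hj
    rw [getD_canon _ _ _ _ _ (by omega), getD_canon _ _ _ _ _ (by omega)]
    rw [decide_eq_decide]
    unfold vfun
    split_ifs <;> omega
  rw [List.filter_congr hc, length_filter_range]
  omega

lemma isAscSeq_canon (A K M T : ℕ) (hA : 1 ≤ A) : IsAscSeq (canon A K M T) := by
  refine ⟨?_, ?_, ?_⟩
  · intro h
    have := length_canon A K M T
    rw [h] at this
    simp at this; omega
  · rw [getD_canon _ _ _ _ _ (by omega)]
    unfold vfun; split_ifs <;> omega
  · intro i hi hlen
    rw [length_canon] at hlen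
    rw [getD_canon _ _ _ _ _ (by omega), take_canon]
    rw [asc_canon _ _ _ _ (by omega)]
    unfold vfun
    split_ifs <;> omega
lemma vfun_mono (A K M : ℕ) {i j : ℕ} (hij : i ≤ j) (hj : j < A + K + M) :
    vfun A K M i ≤ vfun A K M j := by
  unfold vfun; split_ifs <;> omega

lemma vfun_tail (A K M : ℕ) {i : ℕ} (hi : A + K + M ≤ i) :
    vfun A K M i = K - 1 := by
  unfold vfun; split_ifs <;> omega

lemma vfun_le (A K M i : ℕ) : vfun A K M i ≤ K := by
  unfold vfun; split_ifs <;> omega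

lemma vfun_plateau (A K M : ℕ) {i j : ℕ} (hij : i < j) (hj : j < A + K + M)
    (h : vfun A K M i = vfun A K M j) : vfun A K M i = 0 ∨ vfun A K M i = K := by
  unfold vfun at h ⊢; split_ifs at h ⊢ <;> omega

lemma contains4 {p x : List ℕ} (hp : p.length = 4) (h : Contains p x) :
    ∃ g : ℕ → ℕ, g 0 < g 1 ∧ g 1 < g 2 ∧ g 2 < g 3 ∧ g 3 < x.length ∧
      ∀ i j, i < 4 → j < 4 →
        (x.getD (g i) 0 < x.getD (g j) 0 ↔ p.getD i 0 < p.getD j 0) := by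
  obtain ⟨y, hsub, hleny, hiff⟩ := h
  rw [hp] at hleny hiff
  rw [List.sublist_iff_exists_fin_orderEmbedding_get_eq] at hsub
  obtain ⟨f, hf⟩ := hsub
  refine ⟨fun i => if hi : i < 4 then (f ⟨i, by omega⟩ : Fin x.length).val else 0,
    ?_, ?_, ?_, ?_, ?_⟩
  · simp only [dif_pos (by norm_num : (0:ℕ) < 4), dif_pos (by norm_num : (1:ℕ) < 4)]
    exact f.lt_iff_lt.mpr (by simp [Fin.lt_def])
  · simp only [dif_pos (by norm_num : (1:ℕ) < 4), dif_pos (by norm_num : (2:ℕ) < 4)]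
    exact f.lt_iff_lt.mpr (by simp [Fin.lt_def])
  · simp only [dif_pos (by norm_num : (2:ℕ) < 4), dif_pos (by norm_num : (3:ℕ) < 4)]
    exact f.lt_iff_lt.mpr (by simp [Fin.lt_def])
  · simp only [dif_pos (by norm_num : (3:ℕ) < 4)]
    exact (f ⟨3, by omega⟩).isLt
  · intro i j hi hj
    have hval : ∀ (i : ℕ) (hi : i < 4),
        x.getD (f ⟨i, by omega⟩ : Fin x.length).val 0 = y.getD i 0 := by
      intro i hi
      rw [List.getD_eq_getElem x 0 (Fin.isLt _), List.getD_eq_getElem y 0 (by omega)]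
      have := hf ⟨i, by omega⟩
      simp only [List.get_eq_getElem] at this
      exact this.symm
    simp only [dif_pos hi, dif_pos hj, hval i hi, hval j hj]
    exact hiff i j (by omega) (by omega)

lemma avoids_canon_aux (A K M T : ℕ) (p : List ℕ) (hp : p.length = 4)
    (h : Contains p (canon A K M T)) :
    ∃ g : ℕ → ℕ, g 0 < g 1 ∧ g 1 < g 2 ∧ g 2 < g 3 ∧
      g 3 < A + K + M + T ∧
      ∀ i j, i < 4 → j < 4 →
        (vfun A K M (g i) < vfun A K M (g j) ↔ p.getD i 0 < p.getD j 0) := by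
  obtain ⟨g, h1, h2, h3, h4, hiff⟩ := contains4 hp h
  rw [length_canon] at h4
  refine ⟨g, h1, h2, h3, h4, ?_⟩
  intro i j hi hj
  have hg : ∀ i, i < 4 → g i < A + K + M + T := by intro i hi; interval_cases i <;> omega
  rw [← getD_canon A K M T _ (hg i hi), ← getD_canon A K M T _ (hg j hj)]
  exact hiff i j hi hj

lemma avoids_0101_canon (A K M T : ℕ) : Avoids [0,1,0,1] (canon A K M T) := by
  intro h
  obtain ⟨g, h1, h2, h3, h4, hiff⟩ := avoids_canon_aux A K M T _ (by simp) h
  have e01 : vfun A K M (g 0) < vfun A K M (g 1) := (hiff 0 1 (by omega) (by omega)).mpr (by decide)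
  have e02 : ¬ vfun A K M (g 0) < vfun A K M (g 2) := fun hh => by simpa using (hiff 0 2 (by omega) (by omega)).mp hh
  have e20 : ¬ vfun A K M (g 2) < vfun A K M (g 0) := fun hh => by simpa using (hiff 2 0 (by omega) (by omega)).mp hh
  have e23 : vfun A K M (g 2) < vfun A K M (g 3) := (hiff 2 3 (by omega) (by omega)).mpr (by decide)
  have e13 : ¬ vfun A K M (g 1) < vfun A K M (g 3) := fun hh => by simpa using (hiff 1 3 (by omega) (by omega)).mp hh
  have e31 : ¬ vfun A K M (g 3) < vfun A K M (g 1) := fun hh => by simpa using (hiff 3 1 (by omega) (by omega)).mp hh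
  rcases Nat.lt_or_ge (g 2) (A + K + M) with hc | hc
  · have := vfun_mono A K M (le_of_lt h2) hc
    omega
  · have c2 := vfun_tail A K M hc
    have c3 := vfun_tail A K M (by omega : A + K + M ≤ g 3)
    omega

lemma avoids_0102_canon (A K M T : ℕ) : Avoids [0,1,0,2] (canon A K M T) := by
  intro h
  obtain ⟨g, h1, h2, h3, h4, hiff⟩ := avoids_canon_aux A K M T _ (by simp) h
  have e01 : vfun A K M (g 0) < vfun A K M (g 1) := (hiff 0 1 (by omega) (by omega)).mpr (by decide)
  have e02 : ¬ vfun A K M (g 0) < vfun A K M (g 2) := fun hh => by simpa using (hiff 0 2 (by omega) (by omega)).mp hh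
  have e20 : ¬ vfun A K M (g 2) < vfun A K M (g 0) := fun hh => by simpa using (hiff 2 0 (by omega) (by omega)).mp hh
  have e13 : vfun A K M (g 1) < vfun A K M (g 3) := (hiff 1 3 (by omega) (by omega)).mpr (by decide)
  rcases Nat.lt_or_ge (g 2) (A + K + M) with hc | hc
  · have := vfun_mono A K M (le_of_lt h2) hc
    omega
  · have c2 := vfun_tail A K M hc
    have c3 := vfun_tail A K M (by omega : A + K + M ≤ g 3)
    omega

lemma avoids_0112_canon (A K M T : ℕ) : Avoids [0,1,1,2] (canon A K M T) := by
  intro h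
  obtain ⟨g, h1, h2, h3, h4, hiff⟩ := avoids_canon_aux A K M T _ (by simp) h
  have e01 : vfun A K M (g 0) < vfun A K M (g 1) := (hiff 0 1 (by omega) (by omega)).mpr (by decide)
  have e12 : ¬ vfun A K M (g 1) < vfun A K M (g 2) := fun hh => by simpa using (hiff 1 2 (by omega) (by omega)).mp hh
  have e21 : ¬ vfun A K M (g 2) < vfun A K M (g 1) := fun hh => by simpa using (hiff 2 1 (by omega) (by omega)).mp hh
  have e23 : vfun A K M (g 2) < vfun A K M (g 3) := (hiff 2 3 (by omega) (by omega)).mpr (by decide)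
  rcases Nat.lt_or_ge (g 2) (A + K + M) with hc | hc
  · have hpl := vfun_plateau A K M h2 hc (by omega)
    have hle := vfun_le A K M (g 3)
    omega
  · have c2 := vfun_tail A K M hc
    have c3 := vfun_tail A K M (by omega : A + K + M ≤ g 3)
    omega

lemma avoids_0120_canon (A K M T : ℕ) : Avoids [0,1,2,0] (canon A K M T) := by
  intro h
  obtain ⟨g, h1, h2, h3, h4, hiff⟩ := avoids_canon_aux A K M T _ (by simp) h
  have e01 : vfun A K M (g 0) < vfun A K M (g 1) := (hiff 0 1 (by omega) (by omega)).mpr (by decide)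
  have e12 : vfun A K M (g 1) < vfun A K M (g 2) := (hiff 1 2 (by omega) (by omega)).mpr (by decide)
  have e03 : ¬ vfun A K M (g 0) < vfun A K M (g 3) := fun hh => by simpa using (hiff 0 3 (by omega) (by omega)).mp hh
  have e30 : ¬ vfun A K M (g 3) < vfun A K M (g 0) := fun hh => by simpa using (hiff 3 0 (by omega) (by omega)).mp hh
  rcases Nat.lt_or_ge (g 3) (A + K + M) with hc | hc
  · have := vfun_mono A K M (le_of_lt h3) hc
    omega
  · have c3 := vfun_tail A K M hc
    have := vfun_le A K M (g 2)
    omega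
def Good (n : ℕ) (x : List ℕ) : Prop :=
  x.length = n ∧ IsAscSeq x ∧ Avoids [0, 1, 0, 1] x ∧ Avoids [0, 1, 0, 2] x ∧
    Avoids [0, 1, 1, 2] x ∧ Avoids [0, 1, 2, 0] x

def CForm (n : ℕ) (x : List ℕ) : Prop :=
  x = canon n 0 0 0 ∨ ∃ a k m t, a + k + m + t + 2 = n ∧ x = canon (a+1) (k+1) m t

lemma good_of_cform {n : ℕ} (hn : 1 ≤ n) {x : List ℕ} (h : CForm n x) : Good n x := by
  have key : ∀ A K M T, 1 ≤ A → A + K + M + T = n → Good n (canon A K M T) := by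
    intro A K M T hA hsum
    exact ⟨by rw [length_canon]; omega, isAscSeq_canon A K M T hA,
      avoids_0101_canon A K M T, avoids_0102_canon A K M T,
      avoids_0112_canon A K M T, avoids_0120_canon A K M T⟩
  rcases h with h | ⟨a, k, m, t, hsum, h⟩
  · rw [h]; exact key n 0 0 0 hn (by omega)
  · rw [h]; exact key (a+1) (k+1) m t (by omega) (by omega)

lemma isAscSeq_prefix {y : List ℕ} {v : ℕ} (hy : y ≠ []) (h : IsAscSeq (y ++ [v])) :
    IsAscSeq y := by
  obtain ⟨-, h2, h3⟩ := h
  have hl : 0 < y.length := List.length_pos_iff.mpr hy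
  refine ⟨hy, ?_, ?_⟩
  · rwa [List.getD_eq_getElem _ _ (by simp), List.getElem_append_left hl,
      ← List.getD_eq_getElem y 0 hl] at h2
  · intro i hi hilen
    have := h3 i hi (by simp; omega)
    have htake : List.take i (y ++ [v]) = List.take i y := by
      rw [List.take_append, show i - y.length = 0 from by omega]
      simp
    rwa [List.getD_eq_getElem _ _ (by simp; omega), List.getElem_append_left hilen,
      ← List.getD_eq_getElem y 0 hilen, htake] at this

lemma avoids_prefix {p y : List ℕ} {v : ℕ} (h : Avoids p (y ++ [v])) : Avoids p y := by
  intro hc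
  obtain ⟨w, hsub, hlen, hiff⟩ := hc
  exact h ⟨w, hsub.trans (List.sublist_append_left y [v]), hlen, hiff⟩

lemma last_le {y : List ℕ} {v : ℕ} (hy : 1 ≤ y.length) (h : IsAscSeq (y ++ [v])) :
    v ≤ 1 + asc y := by
  obtain ⟨-, -, h3⟩ := h
  have := h3 y.length (by omega) (by simp)
  rw [List.take_left, List.getD_eq_getElem _ _ (by simp)] at this
  simpa using this

lemma quad_sublist {a b c d : ℕ} {l1 l2 l3 l4 : List ℕ}
    (h1 : a ∈ l1) (h2 : b ∈ l2) (h3 : c ∈ l3) (h4 : d ∈ l4) :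
    [a, b, c, d].Sublist (l1 ++ l2 ++ l3 ++ l4) := by
  have := ((List.singleton_sublist.mpr h1).append
    ((List.singleton_sublist.mpr h2).append
      ((List.singleton_sublist.mpr h3).append (List.singleton_sublist.mpr h4))))
  simpa [List.append_assoc] using this
lemma canon_snoc {A K M T v A' K' M' T' : ℕ}
    (hlen : A' + K' + M' + T' = A + K + M + T + 1)
    (hv : vfun A' K' M' (A + K + M + T) = v)
    (hagree : ∀ j, j < A + K + M + T → vfun A K M j = vfun A' K' M' j) :
    canon A K M T ++ [v] = canon A' K' M' T' := by
  apply List.ext_getElem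
  · simp; omega
  · intro j h1 h2
    rw [getElem_canon]
    rw [List.getElem_append]
    simp only [List.length_append, length_canon, List.length_singleton] at h1 h2 ⊢
    split_ifs with hj
    · rw [getElem_canon]
      exact hagree j (by omega)
    · rw [List.getElem_singleton]
      have hje : j = A + K + M + T := by omega
      rw [hje]
      exact hv.symm

-- the general 0120 witness : appending v with v + 2 ≤ K
lemma not_good_low {A K M T v n : ℕ} (hA : 1 ≤ A) (hv : v + 2 ≤ K)
    (h : Good n (canon A K M T ++ [v])) : False := by
  obtain ⟨-, -, -, -, -, h0120⟩ := h
  apply h0120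
  refine ⟨[v, v+1, K, v], ?_, by simp, ?_⟩
  · have hsplit : List.range' 1 v ++ [1+v] ++ List.range' (1+(v+1)) (K-v-1) =
        List.range' 1 K := by
      rw [← List.range'_1_concat, List.range'_append_1]
      congr 1
      omega
    have hshape : canon A K M T ++ [v] =
        (List.replicate A 0 ++ List.range' 1 v) ++ [1+v] ++ List.range' (1+(v+1)) (K-v-1) ++
          (List.replicate M K ++ List.replicate T (K-1) ++ [v]) := by
      rw [canon, ← hsplit]
      simp [List.append_assoc]
    rw [hshape]
    apply quad_sublist
    · rcases Nat.eq_zero_or_pos v with hv0 | hv0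
      · subst hv0
        exact List.mem_append_left _ (List.mem_replicate.mpr ⟨by omega, rfl⟩)
      · exact List.mem_append_right _ (List.mem_range'_1.mpr ⟨hv0, by omega⟩)
    · simp [Nat.add_comm]
    · exact List.mem_range'_1.mpr ⟨by omega, by omega⟩
    · simp
  · intro i j hi hj
    simp only [List.length_cons, List.length_nil] at hi hj
    interval_cases i <;> interval_cases j <;>
      simp [List.getD_cons_zero, List.getD_cons_succ] <;> omega

-- 0112 witness : plateau (M ≥ 1, T = 0) and appending K + 1
lemma not_good_0112 {A K M T v n : ℕ} (hA : 1 ≤ A) (hK : 1 ≤ K) (hM : 1 ≤ M)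
    (hv : v = K + 1) (h : Good n (canon A K M T ++ [v])) : False := by
  obtain ⟨-, -, -, -, h0112, -⟩ := h
  apply h0112
  refine ⟨[0, K, K, v], ?_, by simp, ?_⟩
  · have hshape : canon A K M T ++ [v] =
        List.replicate A 0 ++ List.range' 1 K ++ List.replicate M K ++
          (List.replicate T (K-1) ++ [v]) := by
      rw [canon]; simp [List.append_assoc]
    rw [hshape]
    apply quad_sublist
    · exact List.mem_replicate.mpr ⟨by omega, rfl⟩
    · exact List.mem_range'_1.mpr ⟨by omega, by omega⟩
    · exact List.mem_replicate.mpr ⟨by omega, rfl⟩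
    · simp
  · intro i j hi hj
    simp only [List.length_cons, List.length_nil] at hi hj
    interval_cases i <;> interval_cases j <;>
      simp [List.getD_cons_zero, List.getD_cons_succ] <;> omega

-- tail witnesses : T ≥ 1, appending K (pattern 0101) or K + 1 (pattern 0102)
lemma not_good_tail {A K M T v n : ℕ} (hA : 1 ≤ A) (hK : 1 ≤ K) (hT : 1 ≤ T)
    (hv : v = K ∨ v = K + 1) (h : Good n (canon A K M T ++ [v])) : False := by
  obtain ⟨-, -, h0101, h0102, -, -⟩ := h
  have hsub : [K-1, 1+(K-1), K-1, v].Sublist (canon A K M T ++ [v]) := by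
    have hsplit : List.range' 1 (K-1) ++ [1+(K-1)] = List.range' 1 K := by
      rw [← List.range'_1_concat]
      congr 1
      omega
    have hshape : canon A K M T ++ [v] =
        (List.replicate A 0 ++ List.range' 1 (K-1)) ++ [1+(K-1)] ++
          (List.replicate M K ++ List.replicate T (K-1)) ++ [v] := by
      rw [canon, ← hsplit]
      simp [List.append_assoc]
    rw [hshape]
    apply quad_sublist
    · rcases Nat.lt_or_ge 1 K with hK2 | hK2
      · exact List.mem_append_right _ (List.mem_range'_1.mpr ⟨by omega, by omega⟩)
      · have : K - 1 = 0 := by omega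
        rw [this]
        exact List.mem_append_left _ (List.mem_replicate.mpr ⟨by omega, rfl⟩)
    · simp
    · exact List.mem_append_right _ (List.mem_replicate.mpr ⟨by omega, rfl⟩)
    · simp
  rcases hv with hv | hv
  · apply h0101
    refine ⟨[K-1, 1+(K-1), K-1, v], hsub, by simp, ?_⟩
    intro i j hi hj
    simp only [List.length_cons, List.length_nil] at hi hj
    interval_cases i <;> interval_cases j <;>
      simp [List.getD_cons_zero, List.getD_cons_succ] <;> omega
  · apply h0102
    refine ⟨[K-1, 1+(K-1), K-1, v], hsub, by simp, ?_⟩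
    intro i j hi hj
    simp only [List.length_cons, List.length_nil] at hi hj
    interval_cases i <;> interval_cases j <;>
      simp [List.getD_cons_zero, List.getD_cons_succ] <;> omega
lemma cform_step {n : ℕ} (hn : 1 ≤ n) {y : List ℕ} {v : ℕ}
    (hC : CForm n y) (hG : Good (n+1) (y ++ [v])) : CForm (n+1) (y ++ [v]) := by
  have hylen : y.length = n := by
    have := hG.1; simp only [List.length_append, List.length_singleton] at this; omega
  have hvle : v ≤ 1 + asc y := last_le (by omega) hG.2.1
  rcases hC with hy | ⟨a, k, m, t, hsum, hy⟩
  · subst hy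
    rw [asc_canon n 0 0 0 hn] at hvle
    have hv : v = 0 ∨ v = 1 := by omega
    rcases hv with hv | hv
    · left
      refine canon_snoc ?_ ?_ ?_
      · omega
      · unfold vfun; split_ifs <;> omega
      · intro j hj; unfold vfun; split_ifs <;> omega
    · right
      refine ⟨n-1, 0, 0, 0, by omega, ?_⟩
      refine canon_snoc ?_ ?_ ?_
      · omega
      · unfold vfun; split_ifs <;> omega
      · intro j hj; unfold vfun; split_ifs <;> omega
  · subst hy
    rw [asc_canon _ _ _ _ (by omega)] at hvle
    have hcases : v + 2 ≤ k + 1 ∨ v = k ∨ v = k + 1 ∨ v = k + 2 := by omega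
    by_cases ht : t = 0
    · subst ht
      by_cases hm : m = 0
      · subst hm
        rcases hcases with hv | hv | hv | hv
        · exact absurd hG (fun h => not_good_low (by omega) (by omega) h)
        · refine Or.inr ⟨a, k, 0, 1, by omega, ?_⟩
          refine canon_snoc ?_ ?_ ?_
          · omega
          · unfold vfun; split_ifs <;> omega
          · intro j hj; unfold vfun; split_ifs <;> omega
        · refine Or.inr ⟨a, k, 1, 0, by omega, ?_⟩
          refine canon_snoc ?_ ?_ ?_
          · omega
          · unfold vfun; split_ifs <;> omega
          · intro j hj; unfold vfun; split_ifs <;> omega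
        · refine Or.inr ⟨a, k+1, 0, 0, by omega, ?_⟩
          refine canon_snoc ?_ ?_ ?_
          · omega
          · unfold vfun; split_ifs <;> omega
          · intro j hj; unfold vfun; split_ifs <;> omega
      · rcases hcases with hv | hv | hv | hv
        · exact absurd hG (fun h => not_good_low (by omega) (by omega) h)
        · refine Or.inr ⟨a, k, m, 1, by omega, ?_⟩
          refine canon_snoc ?_ ?_ ?_
          · omega
          · unfold vfun; split_ifs <;> omega
          · intro j hj; unfold vfun; split_ifs <;> omega
        · refine Or.inr ⟨a, k, m+1, 0, by omega, ?_⟩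
          refine canon_snoc ?_ ?_ ?_
          · omega
          · unfold vfun; split_ifs <;> omega
          · intro j hj; unfold vfun; split_ifs <;> omega
        · exact absurd hG (fun h => not_good_0112 (by omega) (by omega) (by omega)
            (by omega) h)
    · rcases hcases with hv | hv | hv | hv
      · exact absurd hG (fun h => not_good_low (by omega) (by omega) h)
      · refine Or.inr ⟨a, k, m, t+1, by omega, ?_⟩
        refine canon_snoc ?_ ?_ ?_
        · omega
        · unfold vfun; split_ifs <;> omega
        · intro j hj; unfold vfun; split_ifs <;> omega
      · exact absurd hG (fun h => not_good_tail (by omega) (by omega) (by omega)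
          (Or.inl (by omega)) h)
      · exact absurd hG (fun h => not_good_tail (by omega) (by omega) (by omega)
          (Or.inr (by omega)) h)

lemma good_cform : ∀ n, 1 ≤ n → ∀ x, Good n x → CForm n x := by
  intro n hn
  induction n, hn using Nat.le_induction with
  | base =>
    intro x hx
    obtain ⟨a, rfl⟩ := List.length_eq_one_iff.mp hx.1
    have h0 := hx.2.1.2.1
    simp [List.getD] at h0
    subst h0
    left
    simp [canon]
  | succ n hn IH =>
    intro x hx
    have hne : x ≠ [] := by
      intro h; rw [h] at hx; exact absurd hx.1 (by simp)
    have hsplit := List.dropLast_append_getLast hne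
    rw [← hsplit] at hx ⊢
    have hylen : x.dropLast.length = n := by
      have := hx.1
      simp only [List.length_append, List.length_singleton] at this
      omega
    have hyne : x.dropLast ≠ [] := by
      intro h; rw [h] at hylen; simp at hylen; omega
    have hGy : Good n x.dropLast :=
      ⟨hylen, isAscSeq_prefix hyne hx.2.1, avoids_prefix hx.2.2.1,
        avoids_prefix hx.2.2.2.1, avoids_prefix hx.2.2.2.2.1, avoids_prefix hx.2.2.2.2.2⟩
    exact cform_step hn (IH _ hGy) hx

lemma good_iff_cform {n : ℕ} (hn : 1 ≤ n) (x : List ℕ) : Good n x ↔ CForm n x :=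
  ⟨good_cform n hn x, good_of_cform hn⟩
lemma canon_inj {a k m t a' k' m' t' : ℕ}
    (h : canon (a+1) (k+1) m t = canon (a'+1) (k'+1) m' t') :
    a = a' ∧ k = k' ∧ m = m' ∧ t = t' := by
  have hlen := congrArg List.length h
  simp only [length_canon] at hlen
  have hgd : ∀ i, i < a+1+(k+1)+m+t → vfun (a+1) (k+1) m i = vfun (a'+1) (k'+1) m' i := by
    intro i hi
    have := congrArg (fun l => l.getD i 0) h
    rwa [getD_canon _ _ _ _ _ hi, getD_canon _ _ _ _ _ (by omega)] at this
  have hA : a = a' := by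
    by_contra hne
    rcases Nat.lt_or_ge a a' with hlt | hlt
    · have := hgd (a+1) (by omega)
      unfold vfun at this; split_ifs at this <;> omega
    · have := hgd (a'+1) (by omega)
      unfold vfun at this; split_ifs at this <;> omega
  subst hA
  have hK : k = k' := by
    by_contra hne
    rcases Nat.lt_or_ge k k' with hlt | hlt
    · have := hgd (a+1+k+1) (by omega)
      unfold vfun at this; split_ifs at this <;> omega
    · have := hgd (a+1+k'+1) (by omega)
      unfold vfun at this; split_ifs at this <;> omega
  subst hK
  have hM : m = m' := by
    by_contra hne
    rcases Nat.lt_or_ge m m' with hlt | hlt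
    · have := hgd (a+1+(k+1)+m) (by omega)
      unfold vfun at this; split_ifs at this <;> omega
    · have := hgd (a+1+(k+1)+m') (by omega)
      unfold vfun at this; split_ifs at this <;> omega
  subst hM
  exact ⟨rfl, rfl, rfl, by omega⟩

lemma exists_sorted3 {s : Finset ℕ} (h : s.card = 3) :
    ∃ x y z, x < y ∧ y < z ∧ s = {x, y, z} := by
  obtain ⟨x, y, z, hxy, hxz, hyz, rfl⟩ := Finset.card_eq_three.mp h
  rcases Nat.lt_trichotomy x y with h1 | h1 | h1
  · rcases Nat.lt_trichotomy y z with h2 | h2 | h2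
    · exact ⟨x, y, z, h1, h2, rfl⟩
    · omega
    · rcases Nat.lt_trichotomy x z with h3 | h3 | h3
      · exact ⟨x, z, y, h3, h2, by ext a; simp; tauto⟩
      · omega
      · exact ⟨z, x, y, h3, h1, by ext a; simp; tauto⟩
  · omega
  · rcases Nat.lt_trichotomy x z with h3 | h3 | h3
    · exact ⟨y, x, z, h1, h3, by ext a; simp; tauto⟩
    · omega
    · rcases Nat.lt_trichotomy y z with h2 | h2 | h2
      · exact ⟨y, z, x, h2, h3, by ext a; simp; tauto⟩
      · omega
      · exact ⟨z, y, x, h2, h1, by ext a; simp; tauto⟩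

theorem stmt_15 (n : ℕ) (hn : 1 ≤ n) :
    Nat.card {x : List ℕ // x.length = n ∧ IsAscSeq x ∧ Avoids [0, 1, 0, 1] x ∧ Avoids [0, 1, 0, 2] x ∧ Avoids [0, 1, 1, 2] x ∧ Avoids [0, 1, 2, 0] x} = 1 + Nat.choose (n + 1) 3 := by
  classical
  set Q : Finset (ℕ × ℕ × ℕ × ℕ) :=
    (Finset.range (n+1) ×ˢ Finset.range (n+1) ×ˢ Finset.range (n+1) ×ˢ
      Finset.range (n+1)).filter
      (fun p => p.1 + p.2.1 + p.2.2.1 + p.2.2.2 + 2 = n) with hQ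
  have hQmem : ∀ p : ℕ × ℕ × ℕ × ℕ, p ∈ Q ↔ p.1 + p.2.1 + p.2.2.1 + p.2.2.2 + 2 = n := by
    intro p
    simp only [hQ, Finset.mem_filter, Finset.mem_product, Finset.mem_range]
    constructor
    · tauto
    · intro h; refine ⟨⟨?_, ?_, ?_, ?_⟩, h⟩ <;> omega
  set S : Finset (List ℕ) :=
    insert (canon n 0 0 0)
      (Q.image (fun p => canon (p.1+1) (p.2.1+1) p.2.2.1 p.2.2.2)) with hS
  have hmem : ∀ x : List ℕ,
      (x.length = n ∧ IsAscSeq x ∧ Avoids [0, 1, 0, 1] x ∧ Avoids [0, 1, 0, 2] x ∧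
        Avoids [0, 1, 1, 2] x ∧ Avoids [0, 1, 2, 0] x) ↔ x ∈ S := by
    intro x
    have : (x.length = n ∧ IsAscSeq x ∧ Avoids [0, 1, 0, 1] x ∧ Avoids [0, 1, 0, 2] x ∧
        Avoids [0, 1, 1, 2] x ∧ Avoids [0, 1, 2, 0] x) ↔ Good n x := Iff.rfl
    rw [this, good_iff_cform hn]
    constructor
    · rintro (h | ⟨a, k, m, t, hsum, h⟩)
      · rw [hS, h]; exact Finset.mem_insert_self _ _
      · rw [hS]
        apply Finset.mem_insert_of_mem
        exact Finset.mem_image.mpr ⟨(a, k, m, t), (hQmem _).mpr (by simpa using hsum), h.symm⟩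
    · intro hx
      rw [hS, Finset.mem_insert] at hx
      rcases hx with hx | hx
      · exact Or.inl hx
      · obtain ⟨p, hp, heq⟩ := Finset.mem_image.mp hx
        exact Or.inr ⟨p.1, p.2.1, p.2.2.1, p.2.2.2, (hQmem _).mp hp, heq.symm⟩
  have hcard1 : Nat.card {x : List ℕ // x.length = n ∧ IsAscSeq x ∧
      Avoids [0, 1, 0, 1] x ∧ Avoids [0, 1, 0, 2] x ∧
      Avoids [0, 1, 1, 2] x ∧ Avoids [0, 1, 2, 0] x} = S.card := by
    rw [Nat.card_congr (Equiv.subtypeEquivRight hmem), Nat.card_eq_finsetCard]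
  rw [hcard1]
  have hnotmem : canon n 0 0 0 ∉
      Q.image (fun p => canon (p.1+1) (p.2.1+1) p.2.2.1 p.2.2.2) := by
    intro hx
    obtain ⟨p, hp, heq⟩ := Finset.mem_image.mp hx
    have hsum := (hQmem _).mp hp
    have := congrArg (fun l => l.getD (p.1+1) 0) heq
    rw [getD_canon _ _ _ _ _ (by omega), getD_canon _ _ _ _ _ (by omega)] at this
    unfold vfun at this
    split_ifs at this <;> omega
  rw [hS, Finset.card_insert_of_notMem hnotmem]
  have hinj : Set.InjOn (fun p : ℕ × ℕ × ℕ × ℕ => canon (p.1+1) (p.2.1+1) p.2.2.1 p.2.2.2) Q := by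
    intro p hp q hq heq
    obtain ⟨h1, h2, h3, h4⟩ := canon_inj heq
    obtain ⟨p1, p2, p3, p4⟩ := p
    obtain ⟨q1, q2, q3, q4⟩ := q
    simp only [Prod.mk.injEq] at h1 h2 h3 h4 ⊢
    exact ⟨h1, h2, h3, h4⟩
  rw [Finset.card_image_of_injOn hinj]
  have hQcard : Q.card = (n+1).choose 3 := by
    have := Finset.card_powersetCard 3 (Finset.range (n+1))
    rw [Finset.card_range] at this
    rw [← this]
    apply Finset.card_bij
      (fun p _ => ({p.1, p.1 + p.2.1 + 1, p.1 + p.2.1 + p.2.2.1 + 2} : Finset ℕ))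
    · intro p hp
      have hsum := (hQmem _).mp hp
      rw [Finset.mem_powersetCard]
      constructor
      · intro a ha
        simp only [Finset.mem_insert, Finset.mem_singleton] at ha
        rw [Finset.mem_range]
        omega
      · rw [Finset.card_insert_of_notMem (by simp; omega),
          Finset.card_insert_of_notMem (by simp; omega), Finset.card_singleton]
    · intro p hp q hq heq
      have hsp := (hQmem _).mp hp
      have hsq := (hQmem _).mp hq
      obtain ⟨p1, p2, p3, p4⟩ := p
      obtain ⟨q1, q2, q3, q4⟩ := q
      simp only at heq hsp hsq ⊢
      have m1 : p1 ∈ ({q1, q1+q2+1, q1+q2+q3+2} : Finset ℕ) := by rw [← heq]; simp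
      have m2 : p1+p2+1 ∈ ({q1, q1+q2+1, q1+q2+q3+2} : Finset ℕ) := by rw [← heq]; simp
      have m3 : p1+p2+p3+2 ∈ ({q1, q1+q2+1, q1+q2+q3+2} : Finset ℕ) := by rw [← heq]; simp
      have m4 : q1 ∈ ({p1, p1+p2+1, p1+p2+p3+2} : Finset ℕ) := by rw [heq]; simp
      have m5 : q1+q2+1 ∈ ({p1, p1+p2+1, p1+p2+p3+2} : Finset ℕ) := by rw [heq]; simp
      have m6 : q1+q2+q3+2 ∈ ({p1, p1+p2+1, p1+p2+p3+2} : Finset ℕ) := by rw [heq]; simp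
      simp only [Finset.mem_insert, Finset.mem_singleton] at m1 m2 m3 m4 m5 m6
      refine Prod.ext ?_ (Prod.ext ?_ (Prod.ext ?_ ?_)) <;> simp <;> omega
    · intro b hb
      rw [Finset.mem_powersetCard] at hb
      obtain ⟨hsub, hcard⟩ := hb
      obtain ⟨x, y, z, hxy, hyz, rfl⟩ := exists_sorted3 hcard
      have hz : z < n + 1 := by
        have := hsub (by simp : z ∈ ({x, y, z} : Finset ℕ))
        rwa [Finset.mem_range] at this
      refine ⟨(x, y - x - 1, z - y - 1, n - z), (hQmem _).mpr (by simp; omega), ?_⟩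
      simp only
      rw [show x + (y - x - 1) + 1 = y from by omega,
        show x + (y - x - 1) + (z - y - 1) + 2 = z from by omega]
  rw [hQcard]
  omega
end

section
/- For n >= 1, the number of ascent sequences of length n avoiding the four patterns 0101, 0102, 0120, and 0121 equals 2^{n-1} + C(n-1, 2). -/
/-!
Before its first descent an ascent sequence rises by steps of at most one, because
there its ascent count is at most its current value. A sequence avoiding the four patterns that
never descends is therefore a staircase, determined by its set of ascent positions among the first
`n - 1`: this gives `2 ^ (n - 1)` sequences. At a first descent `x_k > x_{k+1}` we must have
`x_k = 1` and `x_{k+1} = 0`, since otherwise a value strictly between `0` and `x_k` taken earlier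
produces `0120` or `0121`; after that every entry is `0`, since otherwise `0 1 0 x_m` is `0101` or
`0102`. So the sequence is a plateau `0^a 1^b 0^c` with `a, b, c ≥ 1`, and there are
`C(n - 1, 2)` of those. Conversely staircases contain no descent, and plateaus take only the values
`0, 1` and have no valley, so both avoid all four patterns.
-/

open Finset

lemma getD_map_range {g : ℕ → ℕ} {n m : ℕ} (hm : m < n) :
    ((List.range n).map g).getD m 0 = g m := by
  simp [hm]

lemma eq_map_range_of_getD {x : List ℕ} {n : ℕ} {g : ℕ → ℕ} (hx : x.length = n)
    (h : ∀ m < n, x.getD m 0 = g m) : x = (List.range n).map g := by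
  refine List.ext_getElem (by simp [hx]) fun m hm _ => ?_
  simpa [List.getD_eq_getElem, hm] using h m (hx ▸ hm)

lemma exists_eq_of_forall_succ_le_add_one {f : ℕ → ℕ} {k d : ℕ}
    (hstep : ∀ u < k, f (u + 1) ≤ f u + 1) (h0 : f 0 ≤ d) (hk : d ≤ f k) :
    ∃ s ≤ k, f s = d := by
  induction k with
  | zero => exact ⟨0, le_rfl, by omega⟩
  | succ k ih =>
    rcases le_or_gt d (f k) with h | h
    · obtain ⟨s, hs, hfs⟩ := ih (fun u hu => hstep u (by omega)) h
      exact ⟨s, by omega, hfs⟩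
    · exact ⟨k + 1, le_rfl, by have := hstep k (by omega); omega⟩

lemma asc_take_succ {x : List ℕ} {m : ℕ} (hm : m < x.length) :
    asc (x.take (m + 1)) =
      ((List.range m).filter fun j => x.getD j 0 < x.getD (j + 1) 0).length := by
  have hlen : (x.take (m + 1)).length - 1 = m := by simp; omega
  rw [asc, hlen]
  congr 1
  refine List.filter_congr fun j hj => ?_
  rw [List.mem_range] at hj
  simp [List.getD_eq_getElem?_getD, hj, Nat.lt_succ_of_lt hj]

lemma asc_take_succ_succ {x : List ℕ} {m : ℕ} (hm : m + 1 < x.length) :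
    asc (x.take (m + 2)) =
      asc (x.take (m + 1)) + if x.getD m 0 < x.getD (m + 1) 0 then 1 else 0 := by
  rw [asc_take_succ hm, asc_take_succ (by omega), List.range_succ, List.filter_append]
  split <;> simp_all

lemma asc_take_one (x : List ℕ) : asc (x.take 1) = 0 := by
  cases x <;> rfl

lemma asc_take_succ_le {x : List ℕ} {u : ℕ}
    (hmono : ∀ v < u, x.getD v 0 ≤ x.getD (v + 1) 0) (hu : u < x.length) :
    asc (x.take (u + 1)) ≤ x.getD u 0 := by
  induction u with
  | zero => simp [asc_take_one]
  | succ u ih =>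
    have := ih (fun v hv => hmono v (by omega)) (by omega)
    have := hmono u (by omega)
    rw [asc_take_succ_succ hu]
    split <;> omega

lemma le_asc_take_succ {x : List ℕ} {u : ℕ} (h0 : x.getD 0 0 = 0)
    (hstep : ∀ v < u, x.getD (v + 1) 0 ≤ x.getD v 0 + 1) (hu : u < x.length) :
    x.getD u 0 ≤ asc (x.take (u + 1)) := by
  induction u with
  | zero => rw [h0]; exact Nat.zero_le _
  | succ u ih =>
    have := ih (fun v hv => hstep v (by omega)) (by omega)
    have := hstep u (by omega)
    rw [asc_take_succ_succ hu]
    split <;> omega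

lemma IsAscSeq.getD_succ_le {x : List ℕ} (hx : IsAscSeq x) {u : ℕ}
    (hmono : ∀ v < u, x.getD v 0 ≤ x.getD (v + 1) 0) (hu : u + 1 < x.length) :
    x.getD (u + 1) 0 ≤ x.getD u 0 + 1 := by
  have := hx.2.2 (u + 1) (by omega) hu
  have := asc_take_succ_le hmono (by omega)
  omega

lemma isAscSeq_of_getD_succ_le {x : List ℕ} (hne : x ≠ []) (h0 : x.getD 0 0 = 0)
    (hstep : ∀ u, u + 1 < x.length → x.getD (u + 1) 0 ≤ x.getD u 0 + 1) : IsAscSeq x := by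
  refine ⟨hne, h0, fun i hi hix => ?_⟩
  obtain ⟨u, rfl⟩ : ∃ u, i = u + 1 := ⟨i - 1, by omega⟩
  have := le_asc_take_succ h0 (fun v hv => hstep v (by omega)) (by omega : u < x.length)
  have := hstep u hix
  omega

lemma Contains.exists_strictMono {p x : List ℕ} (h : Contains p x) :
    ∃ f : ℕ → ℕ, StrictMono f ∧ (∀ i < p.length, f i < x.length) ∧
      ∀ i j, i < p.length → j < p.length →
        (x.getD (f i) 0 < x.getD (f j) 0 ↔ p.getD i 0 < p.getD j 0) := by
  obtain ⟨y, hsub, hlen, hiso⟩ := h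
  obtain ⟨f, hf⟩ := List.sublist_iff_exists_orderEmbedding_getElem?_eq.mp hsub
  have hget : ∀ i < p.length, f i < x.length ∧ x.getD (f i) 0 = y.getD i 0 := by
    intro i hi
    obtain ⟨hfi, heq⟩ := List.getElem?_eq_some_iff.mp
      ((hf i).symm.trans (List.getElem?_eq_getElem (by omega)))
    exact ⟨hfi, by rw [List.getD_eq_getElem _ _ hfi, heq, List.getD_eq_getElem]⟩
  refine ⟨f, f.strictMono, fun i hi => (hget i hi).1, fun i j hi hj => ?_⟩
  rw [(hget i hi).2, (hget j hj).2]
  exact hiso i j hi hj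

lemma contains_of_getD_four {p x : List ℕ} (hp : p.length = 4) {i₀ i₁ i₂ i₃ : ℕ}
    (h₀₁ : i₀ < i₁) (h₁₂ : i₁ < i₂) (h₂₃ : i₂ < i₃) (h₃ : i₃ < x.length)
    (hiso : ∀ i j, i < 4 → j < 4 →
      ([x.getD i₀ 0, x.getD i₁ 0, x.getD i₂ 0, x.getD i₃ 0].getD i 0 <
          [x.getD i₀ 0, x.getD i₁ 0, x.getD i₂ 0, x.getD i₃ 0].getD j 0 ↔
        p.getD i 0 < p.getD j 0)) :
    Contains p x := by
  refine ⟨[x.getD i₀ 0, x.getD i₁ 0, x.getD i₂ 0, x.getD i₃ 0], ?_, by simp [hp],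
    by simpa [hp] using hiso⟩
  have := List.map_getElem_sublist (l := x)
    (is := [⟨i₀, by omega⟩, ⟨i₁, by omega⟩, ⟨i₂, by omega⟩, ⟨i₃, h₃⟩]) (by simp; omega)
  simpa [List.getD_eq_getElem, show i₀ < x.length by omega, show i₁ < x.length by omega,
    show i₂ < x.length by omega, h₃] using this

lemma avoids_of_monotoneOn {p x : List ℕ} (hx : MonotoneOn (x.getD · 0) (Set.Iio x.length))
    {i j : ℕ} (hij : i < j) (hj : j < p.length) (hp : p.getD j 0 < p.getD i 0) :
    Avoids p x := by
  intro h
  obtain ⟨f, hf, hfx, hiso⟩ := h.exists_strictMono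
  have := (hiso j i hj (by omega)).2 hp
  have : x.getD (f i) 0 ≤ x.getD (f j) 0 := hx (hfx i (by omega)) (hfx j hj) (hf hij).le
  omega

lemma avoids_of_le_one {p x : List ℕ} (hx : ∀ m, x.getD m 0 ≤ 1) {a b c : ℕ}
    (ha : a < p.length) (hb : b < p.length) (hc : c < p.length)
    (hab : p.getD a 0 < p.getD b 0) (hbc : p.getD b 0 < p.getD c 0) : Avoids p x := by
  intro h
  obtain ⟨f, -, -, hiso⟩ := h.exists_strictMono
  have := (hiso a b ha hb).2 hab
  have := (hiso b c hb hc).2 hbc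
  have := hx (f c)
  omega

lemma avoids_of_forall_not_valley {p x : List ℕ}
    (hx : ∀ u v w, u < v → v < w → w < x.length →
      x.getD v 0 < x.getD u 0 → x.getD w 0 ≤ x.getD v 0)
    {a b c : ℕ} (hab : a < b) (hbc : b < c) (hc : c < p.length)
    (hba : p.getD b 0 < p.getD a 0) (hbc' : p.getD b 0 < p.getD c 0) : Avoids p x := by
  intro h
  obtain ⟨f, hf, hfx, hiso⟩ := h.exists_strictMono
  have := (hiso b a (by omega) (by omega)).2 hba
  have := (hiso b c (by omega) hc).2 hbc'
  have := hx (f a) (f b) (f c) (hf hab) (hf hbc) (hfx c hc)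
  omega

lemma card_inter_range_succ (S : Finset ℕ) (m : ℕ) :
    #(S ∩ range (m + 1)) = #(S ∩ range m) + if m ∈ S then 1 else 0 := by
  rw [range_add_one]
  split
  · rw [inter_insert_of_mem ‹m ∈ S›, card_insert_of_notMem (by simp)]
  · rw [inter_insert_of_notMem ‹m ∉ S›, add_zero]

def staircase (n : ℕ) (S : Finset ℕ) : List ℕ :=
  (List.range n).map fun m => #(S ∩ range m)

def plateau (n i j : ℕ) : List ℕ :=
  (List.range n).map fun m => if i < m ∧ m ≤ j then 1 else 0

def staircases (n : ℕ) : Finset (List ℕ) :=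
  (range (n - 1)).powerset.image (staircase n)

def plateaus (n : ℕ) : Finset (List ℕ) :=
  ((range (n - 1)).sigma range).image fun ji => plateau n ji.2 ji.1

lemma staircase_monotoneOn (n : ℕ) (S : Finset ℕ) :
    MonotoneOn ((staircase n S).getD · 0) (Set.Iio (staircase n S).length) := by
  intro u hu v hv huv
  simp only [staircase, List.length_map, List.length_range, Set.mem_Iio] at hu hv
  simp only [staircase, getD_map_range hu, getD_map_range hv]
  exact card_le_card (inter_subset_inter_left (range_subset_range.2 huv))

lemma staircase_getD_succ_le (n : ℕ) (S : Finset ℕ) {u : ℕ} (hu : u + 1 < n) :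
    (staircase n S).getD (u + 1) 0 ≤ (staircase n S).getD u 0 + 1 := by
  simp only [staircase, getD_map_range hu, getD_map_range (Nat.lt_of_succ_lt hu),
    card_inter_range_succ]
  split <;> omega

lemma staircase_injOn (n : ℕ) : Set.InjOn (staircase n) (range (n - 1)).powerset := by
  intro S hS T hT hST
  simp only [coe_powerset, Set.mem_preimage, Set.mem_powerset_iff, coe_subset] at hS hT
  ext u
  by_cases hu : u + 1 < n
  · have h₀ := congrArg (·.getD u 0) hST
    have h₁ := congrArg (·.getD (u + 1) 0) hST
    simp only [staircase, getD_map_range hu, getD_map_range (Nat.lt_of_succ_lt hu),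
      card_inter_range_succ] at h₀ h₁
    split_ifs at h₁ <;> simp_all
  · have hS' : u ∉ S := fun h => by have := mem_range.1 (hS h); omega
    have hT' : u ∉ T := fun h => by have := mem_range.1 (hT h); omega
    simp [hS', hT']

lemma card_staircases (n : ℕ) : #(staircases n) = 2 ^ (n - 1) := by
  rw [staircases, card_image_of_injOn (staircase_injOn n), card_powerset, card_range]

lemma plateau_getD {n i j : ℕ} (hj : j < n) (m : ℕ) :
    (plateau n i j).getD m 0 = if i < m ∧ m ≤ j then 1 else 0 := by
  by_cases hm : m < n
  · exact getD_map_range hm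
  · rw [List.getD_eq_default _ _ (by simp [plateau]; omega), if_neg (by omega)]

lemma plateau_injective {n i j i' j' : ℕ} (hj : j < n) (hj' : j' < n) (hij : i < j)
    (hij' : i' < j') (h : plateau n i j = plateau n i' j') : i = i' ∧ j = j' := by
  have hval : ∀ m, (i < m ∧ m ≤ j) ↔ (i' < m ∧ m ≤ j') := fun m => by
    have := congrArg (·.getD m 0) h
    simp only [plateau_getD hj, plateau_getD hj'] at this
    split_ifs at this <;> omega
  have := hval (i + 1)
  have := hval (i' + 1)
  have := hval j
  have := hval j'
  omega

lemma card_plateaus (n : ℕ) : #(plateaus n) = (n - 1).choose 2 := by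
  rw [plateaus, card_image_of_injOn, card_sigma]
  · simp only [card_range]
    rw [sum_range_id, Nat.choose_two_right]
  · rintro ⟨j, i⟩ hji ⟨j', i'⟩ hji' h
    simp only [coe_sigma, Set.mem_sigma_iff, mem_coe, mem_range] at hji hji'
    obtain ⟨rfl, rfl⟩ := plateau_injective (by omega) (by omega) hji.2 hji'.2 h
    rfl

def IsAvoidingAscSeq (n : ℕ) (x : List ℕ) : Prop :=
  x.length = n ∧ IsAscSeq x ∧ Avoids [0, 1, 0, 1] x ∧ Avoids [0, 1, 0, 2] x ∧
    Avoids [0, 1, 2, 0] x ∧ Avoids [0, 1, 2, 1] x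

lemma staircase_isAvoidingAscSeq {n : ℕ} (hn : 1 ≤ n) (S : Finset ℕ) :
    IsAvoidingAscSeq n (staircase n S) := by
  have hlen : (staircase n S).length = n := by simp [staircase]
  have hmono := staircase_monotoneOn n S
  refine ⟨hlen, isAscSeq_of_getD_succ_le ?_ ?_ ?_, ?_, ?_, ?_, ?_⟩
  · rw [← List.length_pos_iff, hlen]; omega
  · rw [staircase, getD_map_range (by omega)]
    simp
  · exact fun u hu => staircase_getD_succ_le n S (hlen ▸ hu)
  · exact avoids_of_monotoneOn hmono (i := 1) (j := 2) (by omega) (by simp) (by simp)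
  · exact avoids_of_monotoneOn hmono (i := 1) (j := 2) (by omega) (by simp) (by simp)
  · exact avoids_of_monotoneOn hmono (i := 2) (j := 3) (by omega) (by simp) (by simp)
  · exact avoids_of_monotoneOn hmono (i := 2) (j := 3) (by omega) (by simp) (by simp)

lemma plateau_isAvoidingAscSeq {n i j : ℕ} (hij : i < j) (hj : j < n - 1) :
    IsAvoidingAscSeq n (plateau n i j) := by
  have hlen : (plateau n i j).length = n := by simp [plateau]
  have hval := plateau_getD (i := i) (show j < n by omega)
  have hle : ∀ m, (plateau n i j).getD m 0 ≤ 1 := fun m => by rw [hval]; split <;> omega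
  refine ⟨hlen, isAscSeq_of_getD_succ_le ?_ ?_ ?_, ?_, ?_, ?_, ?_⟩
  · rw [← List.length_pos_iff, hlen]; omega
  · rw [hval]
    simp
  · exact fun u _ => (hle (u + 1)).trans (Nat.le_add_left 1 _)
  · -- a `0` after a `1` lies past the plateau
    refine avoids_of_forall_not_valley (a := 1) (b := 2) (c := 3)
      (fun u v w huv hvw _ => ?_) (by omega) (by omega) (by simp) (by simp) (by simp)
    simp only [hval]
    split_ifs <;> omega
  · exact avoids_of_le_one hle (a := 0) (b := 1) (c := 3) (by simp) (by simp) (by simp)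
      (by simp) (by simp)
  · exact avoids_of_le_one hle (a := 0) (b := 1) (c := 2) (by simp) (by simp) (by simp)
      (by simp) (by simp)
  · exact avoids_of_le_one hle (a := 0) (b := 1) (c := 2) (by simp) (by simp) (by simp)
      (by simp) (by simp)

lemma disjoint_staircases_plateaus (n : ℕ) : Disjoint (staircases n) (plateaus n) := by
  simp only [staircases, plateaus, disjoint_left, mem_image]
  rintro _ ⟨S, -, rfl⟩ ⟨⟨j, i⟩, hji, h⟩
  simp only [mem_sigma, mem_range] at hji
  have hmono := staircase_monotoneOn n S
  have hlen : (staircase n S).length = n := by simp [staircase]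
  have := hmono (a := j) (b := j + 1) (by simp [hlen]; omega) (by simp [hlen]; omega) (by omega)
  simp only [← h, plateau_getD (show j < n by omega)] at this
  split_ifs at this <;> omega

lemma IsAscSeq.getD_eq_one_zero_of_first_descent {x : List ℕ} (hx : IsAscSeq x)
    (h0120 : Avoids [0, 1, 2, 0] x) (h0121 : Avoids [0, 1, 2, 1] x) {k : ℕ}
    (hmono : ∀ v < k, x.getD v 0 ≤ x.getD (v + 1) 0)
    (hk : k + 1 < x.length) (hdesc : x.getD (k + 1) 0 < x.getD k 0) :
    x.getD k 0 = 1 ∧ x.getD (k + 1) 0 = 0 := by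
  have h0 := hx.2.1
  have hstep : ∀ u < k, x.getD (u + 1) 0 ≤ x.getD u 0 + 1 :=
    fun u hu => hx.getD_succ_le (fun v hv => hmono v (by omega)) (by omega)
  by_contra hne
  -- `d` is attained before `k`, and `0 d x_k x_{k+1}` is a `0120` or a `0121`
  obtain ⟨s, hsk, hs⟩ := exists_eq_of_forall_succ_le_add_one (f := (x.getD · 0))
    (d := max 1 (x.getD (k + 1) 0)) hstep (by omega) (by omega)
  have hs₀ : 0 < s := Nat.pos_of_ne_zero fun h => by subst h; omega
  have hsk : s < k := lt_of_le_of_ne hsk fun h => by subst h; omega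
  rcases Nat.eq_zero_or_pos (x.getD (k + 1) 0) with hz | hpos
  · refine h0120 (contains_of_getD_four rfl hs₀ hsk k.lt_add_one hk ?_)
    intro i j hi hj
    interval_cases i <;> interval_cases j <;>
      simp only [List.getD_cons_zero, List.getD_cons_succ] <;> omega
  · refine h0121 (contains_of_getD_four rfl hs₀ hsk k.lt_add_one hk ?_)
    intro i j hi hj
    interval_cases i <;> interval_cases j <;>
      simp only [List.getD_cons_zero, List.getD_cons_succ] <;> omega

lemma getD_eq_zero_after_one_zero {x : List ℕ} (h0 : x.getD 0 0 = 0)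
    (h0101 : Avoids [0, 1, 0, 1] x) (h0102 : Avoids [0, 1, 0, 2] x) {k m : ℕ}
    (hk₁ : x.getD k 0 = 1) (hk₀ : x.getD (k + 1) 0 = 0) (hkm : k + 1 < m)
    (hm : m < x.length) : x.getD m 0 = 0 := by
  have hk : 0 < k := Nat.pos_of_ne_zero fun h => by subst h; omega
  by_contra hne
  rcases Nat.lt_or_ge 1 (x.getD m 0) with hlt | hle
  · refine h0102 (contains_of_getD_four rfl hk k.lt_add_one hkm hm ?_)
    intro i j hi hj
    interval_cases i <;> interval_cases j <;>
      simp only [List.getD_cons_zero, List.getD_cons_succ] <;> omega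
  · refine h0101 (contains_of_getD_four rfl hk k.lt_add_one hkm hm ?_)
    intro i j hi hj
    interval_cases i <;> interval_cases j <;>
      simp only [List.getD_cons_zero, List.getD_cons_succ] <;> omega

lemma mem_staircases_of_monotone {n : ℕ} {x : List ℕ} (hlen : x.length = n) (hx : IsAscSeq x)
    (hmono : ∀ u, u + 1 < n → x.getD u 0 ≤ x.getD (u + 1) 0) : x ∈ staircases n := by
  set S := (range (n - 1)).filter fun u => x.getD u 0 < x.getD (u + 1) 0
  have hheight : ∀ m < n, x.getD m 0 = #(S ∩ range m) := by
    intro m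
    induction m with
    | zero => intro; rw [hx.2.1]; simp
    | succ m ih =>
      intro hm
      have := hx.getD_succ_le (fun v hv => hmono v (by omega)) (hlen ▸ hm)
      have := hmono m hm
      rw [card_inter_range_succ, ← ih (by omega)]
      simp only [S, mem_filter, mem_range]
      split_ifs <;> omega
  exact mem_image.2 ⟨S, mem_powerset.2 (filter_subset _ _),
    (eq_map_range_of_getD hlen hheight).symm⟩

lemma IsAvoidingAscSeq.mem_plateaus_of_descent {n : ℕ} {x : List ℕ}
    (h : IsAvoidingAscSeq n x) {k : ℕ} (hmono : ∀ v < k, x.getD v 0 ≤ x.getD (v + 1) 0)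
    (hk : k + 1 < n) (hdesc : x.getD (k + 1) 0 < x.getD k 0) : x ∈ plateaus n := by
  classical
  obtain ⟨hlen, hx, h0101, h0102, h0120, h0121⟩ := h
  obtain ⟨hk₁, hk₀⟩ :=
    hx.getD_eq_one_zero_of_first_descent h0120 h0121 hmono (hlen ▸ hk) hdesc
  have hprefix : MonotoneOn (x.getD · 0) (Set.Iic k) :=
    monotoneOn_of_le_add_one Set.ordConnected_Iic fun v _ _ hv => hmono v hv
  have hex : ∃ a, x.getD a 0 = 1 := ⟨k, hk₁⟩
  set a := Nat.find hex
  have ha₁ : x.getD a 0 = 1 := Nat.find_spec hex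
  have hak : a ≤ k := Nat.find_min' hex hk₁
  have ha₀ : 0 < a := Nat.pos_of_ne_zero fun h => by rw [h, hx.2.1] at ha₁; omega
  have hval : ∀ m < n, x.getD m 0 = if a - 1 < m ∧ m ≤ k then 1 else 0 := by
    intro m hm
    rcases Nat.lt_or_ge k m with hkm | hmk
    · rw [if_neg (by omega)]
      rcases Nat.eq_or_lt_of_le hkm with rfl | hkm
      · exact hk₀
      · exact getD_eq_zero_after_one_zero hx.2.1 h0101 h0102 hk₁ hk₀ hkm (hlen ▸ hm)
    · have hle : x.getD m 0 ≤ 1 := hk₁ ▸ hprefix (Set.mem_Iic.2 hmk) Set.self_mem_Iic hmk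
      by_cases ham : a ≤ m
      · have : 1 ≤ x.getD m 0 := ha₁ ▸ hprefix (Set.mem_Iic.2 hak) (Set.mem_Iic.2 hmk) ham
        rw [if_pos (by omega)]
        omega
      · have : x.getD m 0 ≠ 1 := Nat.find_min hex (by omega)
        rw [if_neg (by omega)]
        omega
  exact mem_image.2 ⟨⟨k, a - 1⟩, by simp only [mem_sigma, mem_range]; omega,
    (eq_map_range_of_getD hlen hval).symm⟩

lemma IsAvoidingAscSeq.mem_staircases_union_plateaus {n : ℕ} {x : List ℕ}
    (h : IsAvoidingAscSeq n x) : x ∈ staircases n ∪ plateaus n := by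
  classical
  by_cases hmono : ∀ u, u + 1 < n → x.getD u 0 ≤ x.getD (u + 1) 0
  · exact mem_union_left _ (mem_staircases_of_monotone h.1 h.2.1 hmono)
  · push Not at hmono
    have hk := Nat.find_spec hmono
    exact mem_union_right _ (h.mem_plateaus_of_descent
      (fun v hv => not_lt.1 fun h => Nat.find_min hmono hv ⟨by omega, h⟩) hk.1 hk.2)

lemma isAvoidingAscSeq_iff {n : ℕ} (hn : 1 ≤ n) {x : List ℕ} :
    IsAvoidingAscSeq n x ↔ x ∈ staircases n ∪ plateaus n := by
  refine ⟨IsAvoidingAscSeq.mem_staircases_union_plateaus, fun h => ?_⟩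
  simp only [mem_union, staircases, plateaus, mem_image, mem_sigma, mem_range] at h
  rcases h with ⟨S, -, rfl⟩ | ⟨⟨j, i⟩, ⟨hj, hi⟩, rfl⟩
  · exact staircase_isAvoidingAscSeq hn S
  · exact plateau_isAvoidingAscSeq hi hj

theorem stmt_16 (n : ℕ) (hn : 1 ≤ n) :
    Nat.card {x : List ℕ // x.length = n ∧ IsAscSeq x ∧ Avoids [0, 1, 0, 1] x ∧ Avoids [0, 1, 0, 2] x ∧ Avoids [0, 1, 2, 0] x ∧ Avoids [0, 1, 2, 1] x} = 2 ^ (n - 1) + Nat.choose (n - 1) 2 := by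
  calc _ = #(staircases n ∪ plateaus n) := by
        rw [← Nat.card_eq_finsetCard]
        exact Nat.card_congr (Equiv.subtypeEquivRight fun x => isAvoidingAscSeq_iff hn)
    _ = _ := by
        rw [card_union_of_disjoint (disjoint_staircases_plateaus n), card_staircases,
          card_plateaus]
end

section
/- For n >= 1, the number of ascent sequences of length n avoiding all five patterns 0101, 0102, 0112, 0120, and 0121 equals (n-1)^2 + 1. -/
/-- type A lists: 0^a, 1,2,...,k, then c copies of k -/
def LA (a k c : ℕ) : List ℕ :=
  List.replicate a 0 ++ (List.range k).map (· + 1) ++ List.replicate c k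

/-- type B lists -/
def LB (a b c : ℕ) : List ℕ :=
  List.replicate a 0 ++ List.replicate b 1 ++ List.replicate c 0

def Fcond (a b c d : ℕ) : Prop :=
  a < b ∧ ((c = a ∧ b ≤ d) ∨ (c = b ∧ b < d) ∨ (b < c ∧ (d = a ∨ d = b)))

def NoPat (x : List ℕ) : Prop := ∀ i j k l, i < j → j < k → k < l → l < x.length →
  ¬ Fcond (x.getD i 0) (x.getD j 0) (x.getD k 0) (x.getD l 0)

lemma length_LA (a k c : ℕ) : (LA a k c).length = a + k + c := by simp [LA]; ring

lemma length_LB (a b c : ℕ) : (LB a b c).length = a + b + c := by simp [LB]; ring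

lemma getD_replicate (n v p : ℕ) (h : p < n) : (List.replicate n v).getD p 0 = v := by
  rw [List.getD_eq_getElem _ _ (by simpa using h), List.getElem_replicate]

lemma getD_LA (a k c p : ℕ) (hp : p < a + k + c) :
    (LA a k c).getD p 0 = if p < a then 0 else if p < a + k then p - a + 1 else k := by
  rw [LA, List.append_assoc]
  by_cases h1 : p < a
  · rw [List.getD_append _ _ _ _ (by simpa using h1), getD_replicate _ _ _ h1, if_pos h1]
  · rw [List.getD_append_right _ _ _ _ (by simpa using h1), if_neg h1]
    simp only [List.length_replicate]
    by_cases h2 : p < a + k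
    · rw [List.getD_append _ _ _ _ (by simp; omega), if_pos h2]
      rw [List.getD_eq_getElem _ _ (by simp; omega)]
      simp
    · rw [List.getD_append_right _ _ _ _ (by simp; omega), if_neg h2]
      rw [List.length_map, List.length_range]
      exact getD_replicate _ _ _ (by omega)

lemma getD_LB (a b c p : ℕ) (hp : p < a + b + c) :
    (LB a b c).getD p 0 = if p < a then 0 else if p < a + b then 1 else 0 := by
  rw [LB, List.append_assoc]
  by_cases h1 : p < a
  · rw [List.getD_append _ _ _ _ (by simpa using h1), getD_replicate _ _ _ h1, if_pos h1]
  · rw [List.getD_append_right _ _ _ _ (by simpa using h1), if_neg h1]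
    simp only [List.length_replicate]
    by_cases h2 : p < a + b
    · rw [List.getD_append _ _ _ _ (by simp; omega), if_pos h2]
      exact getD_replicate _ _ _ (by omega)
    · rw [List.getD_append_right _ _ _ _ (by simp; omega), if_neg h2, List.length_replicate]
      exact getD_replicate _ _ _ (by omega)

/-- count of ascents among first m adjacent pairs -/
def Casc (x : List ℕ) (m : ℕ) : ℕ :=
  ((List.range m).filter (fun j => x.getD j 0 < x.getD (j + 1) 0)).length

lemma getD_take (x : List ℕ) (m j : ℕ) (hj : j < m) :
    (x.take m).getD j 0 = x.getD j 0 := by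
  by_cases h : j < x.length
  · rw [List.getD_eq_getElem _ _ (by simp; omega), List.getD_eq_getElem _ _ h]
    simp
  · rw [List.getD_eq_default _ _ (by simp; omega), List.getD_eq_default _ _ (by omega)]

lemma asc_take (x : List ℕ) (m : ℕ) (hm : m ≤ x.length) :
    asc (x.take m) = Casc x (m - 1) := by
  unfold asc Casc
  rw [List.length_take, min_eq_left hm]
  congr 1
  apply List.filter_congr
  intro j hj
  simp only [List.mem_range] at hj
  rw [getD_take _ _ _ (by omega), getD_take _ _ _ (by omega)]

lemma Casc_succ (x : List ℕ) (m : ℕ) :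
    Casc x (m + 1) = Casc x m + if x.getD m 0 < x.getD (m + 1) 0 then 1 else 0 := by
  unfold Casc
  rw [List.range_succ, List.filter_append, List.length_append]
  simp only [List.filter_cons, List.filter_nil, decide_eq_true_eq]
  split <;> rfl

lemma isAscSeq_of_steps (x : List ℕ) (hne : x ≠ []) (h0 : x.getD 0 0 = 0)
    (hstep : ∀ j, j + 1 < x.length → x.getD (j + 1) 0 ≤ x.getD j 0 + 1) :
    IsAscSeq x := by
  have key : ∀ i, i < x.length → x.getD i 0 ≤ Casc x i := by
    intro i
    induction i with
    | zero => intro _; simp only [h0]; exact Nat.zero_le _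
    | succ m ih =>
      intro hm
      rw [Casc_succ]
      have hs := hstep m hm
      by_cases h : x.getD m 0 < x.getD (m + 1) 0
      · have := ih (by omega)
        rw [if_pos h]; omega
      · have := ih (by omega)
        rw [if_neg h]; omega
  refine ⟨hne, h0, fun i h1 hi => ?_⟩
  rw [asc_take _ _ (le_of_lt hi)]
  have hk := key i hi
  have he : i - 1 + 1 = i := by omega
  have hc : Casc x i ≤ Casc x (i - 1) + 1 := by
    conv_lhs => rw [← he]
    rw [Casc_succ]
    split <;> omega
  omega

lemma nodup_len_le (l : List ℕ) (c K : ℕ) (hnd : l.Nodup) (h : ∀ x ∈ l, c ≤ x ∧ x < c + K) :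
    l.length ≤ K := by
  classical
  have h1 : l.length = l.toFinset.card := (List.toFinset_card_of_nodup hnd).symm
  have h2 : l.toFinset ⊆ Finset.Ico c (c + K) := by
    intro x hx
    simp only [List.mem_toFinset] at hx
    simp only [Finset.mem_Ico]
    exact h x hx
  calc l.length = l.toFinset.card := h1
    _ ≤ (Finset.Ico c (c + K)).card := Finset.card_le_card h2
    _ = K := by simp

lemma Casc_le (x : List ℕ) (m c K : ℕ)
    (h : ∀ j, j < m → x.getD j 0 < x.getD (j + 1) 0 → c ≤ j ∧ j < c + K) :
    Casc x m ≤ K := by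
  apply nodup_len_le _ c K
  · exact List.nodup_range.filter _
  · intro j hj
    simp only [List.mem_filter, List.mem_range, decide_eq_true_eq] at hj
    exact h j hj.1 hj.2

lemma contains_of_indices (x p : List ℕ) (hp : p.length = 4) (i j k l : ℕ)
    (hij : i < j) (hjk : j < k) (hkl : k < l) (hl : l < x.length)
    (hrel : ∀ a b, a < 4 → b < 4 →
      ([x.getD i 0, x.getD j 0, x.getD k 0, x.getD l 0].getD a 0 <
        [x.getD i 0, x.getD j 0, x.getD k 0, x.getD l 0].getD b 0 ↔
        p.getD a 0 < p.getD b 0)) : Contains p x := by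
  have hi : i < x.length := by omega
  have hj : j < x.length := by omega
  have hk : k < x.length := by omega
  refine ⟨[x.getD i 0, x.getD j 0, x.getD k 0, x.getD l 0], ?_, by simp [hp], ?_⟩
  · have hsub := List.map_getElem_sublist (l := x)
      (is := [⟨i, hi⟩, ⟨j, hj⟩, ⟨k, hk⟩, ⟨l, hl⟩])
      (by simp [List.pairwise_cons]; omega)
    rw [List.getD_eq_getElem _ _ hi, List.getD_eq_getElem _ _ hj,
      List.getD_eq_getElem _ _ hk, List.getD_eq_getElem _ _ hl]
    simpa using hsub
  · rw [hp]; exact hrel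

lemma indices_of_contains (x p : List ℕ) (hp : p.length = 4) (h : Contains p x) :
    ∃ i j k l, i < j ∧ j < k ∧ k < l ∧ l < x.length ∧
      (∀ a b, a < 4 → b < 4 →
        ([x.getD i 0, x.getD j 0, x.getD k 0, x.getD l 0].getD a 0 <
          [x.getD i 0, x.getD j 0, x.getD k 0, x.getD l 0].getD b 0 ↔
          p.getD a 0 < p.getD b 0)) := by
  obtain ⟨y, hsub, hlen, hrel⟩ := h
  obtain ⟨is, hy, hpw⟩ := List.sublist_eq_map_getElem hsub
  rw [hp] at hlen
  have hislen : is.length = 4 := by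
    have := congrArg List.length hy
    simpa [hlen] using this.symm
  obtain ⟨i0, is1, rfl⟩ : ∃ a t, is = a :: t := by
    cases is with | nil => simp at hislen | cons a t => exact ⟨a, t, rfl⟩
  obtain ⟨i1, is2, rfl⟩ : ∃ a t, is1 = a :: t := by
    cases is1 with | nil => simp at hislen | cons a t => exact ⟨a, t, rfl⟩
  obtain ⟨i2, is3, rfl⟩ : ∃ a t, is2 = a :: t := by
    cases is2 with | nil => simp at hislen | cons a t => exact ⟨a, t, rfl⟩
  obtain ⟨i3, is4, rfl⟩ : ∃ a t, is3 = a :: t := by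
    cases is3 with | nil => simp at hislen | cons a t => exact ⟨a, t, rfl⟩
  have : is4 = [] := by
    cases is4 with | nil => rfl | cons a t => simp at hislen
  subst this
  simp only [List.pairwise_cons, List.mem_cons, List.mem_singleton] at hpw
  refine ⟨i0, i1, i2, i3, ?_, ?_, ?_, i3.isLt, ?_⟩
  · exact hpw.1 i1 (Or.inl rfl)
  · exact hpw.2.1 i2 (Or.inl rfl)
  · exact hpw.2.2.1 i3 (Or.inl rfl)
  · have hyy : y = [x.getD i0 0, x.getD i1 0, x.getD i2 0, x.getD i3 0] := by
      rw [hy]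
      simp [List.getD_eq_getElem _ _ i0.isLt, List.getD_eq_getElem _ _ i1.isLt,
        List.getD_eq_getElem _ _ i2.isLt, List.getD_eq_getElem _ _ i3.isLt]
    rw [← hyy]
    intro a b ha hb
    exact hrel a b (by omega) (by omega)

lemma noPat_iff (x : List ℕ) : NoPat x ↔
    (Avoids [0, 1, 0, 1] x ∧ Avoids [0, 1, 0, 2] x ∧ Avoids [0, 1, 1, 2] x ∧
      Avoids [0, 1, 2, 0] x ∧ Avoids [0, 1, 2, 1] x) := by
  constructor
  · intro hnp
    refine ⟨?_, ?_, ?_, ?_, ?_⟩ <;>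
    · intro hc
      obtain ⟨i, j, k, l, hij, hjk, hkl, hl, hrel⟩ := indices_of_contains x _ (by rfl) hc
      have h01 := hrel 0 1 (by omega) (by omega)
      have h02 := hrel 0 2 (by omega) (by omega)
      have h20 := hrel 2 0 (by omega) (by omega)
      have h12 := hrel 1 2 (by omega) (by omega)
      have h21 := hrel 2 1 (by omega) (by omega)
      have h13 := hrel 1 3 (by omega) (by omega)
      have h31 := hrel 3 1 (by omega) (by omega)
      have h03 := hrel 0 3 (by omega) (by omega)
      have h30 := hrel 3 0 (by omega) (by omega)
      have h23 := hrel 2 3 (by omega) (by omega)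
      have h32 := hrel 3 2 (by omega) (by omega)
      simp only [List.getD_cons_zero, List.getD_cons_succ] at h01 h02 h20 h12 h21 h13 h31 h03 h30 h23 h32
      exact hnp i j k l hij hjk hkl hl (by unfold Fcond; omega)
  · rintro ⟨h1, h2, h3, h4, h5⟩ i j k l hij hjk hkl hl hF
    obtain ⟨hab, hcase⟩ := hF
    rcases hcase with ⟨hc, hd⟩ | ⟨hc, hd⟩ | ⟨hc, hd⟩
    · rcases eq_or_lt_of_le hd with hd' | hd'
      · exact h1 (contains_of_indices x _ (by rfl) i j k l hij hjk hkl hl (by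
          intro a b ha hb
          interval_cases a <;> interval_cases b <;>
            simp only [List.getD_cons_zero, List.getD_cons_succ] <;> omega))
      · exact h2 (contains_of_indices x _ (by rfl) i j k l hij hjk hkl hl (by
          intro a b ha hb
          interval_cases a <;> interval_cases b <;>
            simp only [List.getD_cons_zero, List.getD_cons_succ] <;> omega))
    · exact h3 (contains_of_indices x _ (by rfl) i j k l hij hjk hkl hl (by
        intro a b ha hb
        interval_cases a <;> interval_cases b <;>
          simp only [List.getD_cons_zero, List.getD_cons_succ] <;> omega))
    · rcases hd with hd | hd
      · exact h4 (contains_of_indices x _ (by rfl) i j k l hij hjk hkl hl (by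
          intro a b ha hb
          interval_cases a <;> interval_cases b <;>
            simp only [List.getD_cons_zero, List.getD_cons_succ] <;> omega))
      · exact h5 (contains_of_indices x _ (by rfl) i j k l hij hjk hkl hl (by
          intro a b ha hb
          interval_cases a <;> interval_cases b <;>
            simp only [List.getD_cons_zero, List.getD_cons_succ] <;> omega))

lemma eq_of_getD (x y : List ℕ) (hlen : x.length = y.length)
    (h : ∀ p, p < x.length → x.getD p 0 = y.getD p 0) : x = y := by
  apply List.ext_getElem hlen
  intro i h1 h2
  have := h i h1
  rwa [List.getD_eq_getElem _ _ h1, List.getD_eq_getElem _ _ h2] at this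

lemma ne_nil_of_len (x : List ℕ) (hn : 0 < x.length) : x ≠ [] := by
  intro h; rw [h] at hn; simp at hn

lemma exists_least {P : ℕ → Prop} (h : ∃ p, P p) :
    ∃ a, P a ∧ ∀ q, q < a → ¬ P q := by
  classical
  exact ⟨Nat.find h, Nat.find_spec h, fun q hq => Nat.find_min h hq⟩

lemma isAscSeq_LA (a k c : ℕ) (ha : 1 ≤ a) : IsAscSeq (LA a k c) := by
  apply isAscSeq_of_steps
  · exact ne_nil_of_len _ (by rw [length_LA]; omega)
  · rw [getD_LA _ _ _ _ (by omega), if_pos (by omega : (0:ℕ) < a)]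
  · intro j hj
    rw [length_LA] at hj
    rw [getD_LA _ _ _ _ (by omega), getD_LA _ _ _ _ (by omega)]
    split_ifs <;> omega

lemma isAscSeq_LB (a b c : ℕ) (ha : 1 ≤ a) : IsAscSeq (LB a b c) := by
  apply isAscSeq_of_steps
  · exact ne_nil_of_len _ (by rw [length_LB]; omega)
  · rw [getD_LB _ _ _ _ (by omega), if_pos (by omega : (0:ℕ) < a)]
  · intro j hj
    rw [length_LB] at hj
    rw [getD_LB _ _ _ _ (by omega), getD_LB _ _ _ _ (by omega)]
    split_ifs <;> omega

lemma noPat_LA (a k c : ℕ) : NoPat (LA a k c) := by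
  intro i j k' l hij hjk hkl hl hF
  rw [length_LA] at hl
  rw [getD_LA _ _ _ _ (by omega), getD_LA _ _ _ _ (by omega),
    getD_LA _ _ _ _ (by omega), getD_LA _ _ _ _ hl] at hF
  unfold Fcond at hF
  obtain ⟨hab, hF⟩ := hF
  split_ifs at hab hF <;>
    rcases hF with ⟨e1, e2⟩ | ⟨e1, e2⟩ | ⟨e1, e2 | e2⟩ <;>
      first | exact e1.elim | exact e2.elim | omega

lemma noPat_LB (a b c : ℕ) : NoPat (LB a b c) := by
  intro i j k' l hij hjk hkl hl hF
  rw [length_LB] at hl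
  rw [getD_LB _ _ _ _ (by omega), getD_LB _ _ _ _ (by omega),
    getD_LB _ _ _ _ (by omega), getD_LB _ _ _ _ hl] at hF
  unfold Fcond at hF
  obtain ⟨hab, hF⟩ := hF
  split_ifs at hab hF <;>
    rcases hF with ⟨e1, e2⟩ | ⟨e1, e2⟩ | ⟨e1, e2 | e2⟩ <;>
      first | exact e1.elim | exact e2.elim | omega

lemma isAscSeq_zeros (n : ℕ) (hn : 1 ≤ n) : IsAscSeq (List.replicate n 0) := by
  apply isAscSeq_of_steps
  · exact ne_nil_of_len _ (by simp; omega)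
  · exact getD_replicate _ _ _ hn
  · intro j hj
    simp only [List.length_replicate] at hj
    rw [getD_replicate _ _ _ (by omega), getD_replicate _ _ _ (by omega)]
    omega

lemma noPat_zeros (n : ℕ) : NoPat (List.replicate n 0) := by
  intro i j k l hij hjk hkl hl hF
  simp only [List.length_replicate] at hl
  rw [getD_replicate _ _ _ (by omega), getD_replicate _ _ _ (by omega)] at hF
  exact absurd hF.1 (by omega)

lemma classify (x : List ℕ) (hx : IsAscSeq x) (hnp : NoPat x) :
    x = List.replicate x.length 0 ∨
    (∃ a k c, 1 ≤ a ∧ 1 ≤ k ∧ a + k + c = x.length ∧ x = LA a k c) ∨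
    (∃ a b c, 1 ≤ a ∧ 1 ≤ b ∧ 1 ≤ c ∧ a + b + c = x.length ∧ x = LB a b c) := by
  by_cases hz : ∀ p, p < x.length → x.getD p 0 = 0
  · left
    apply eq_of_getD _ _ (by simp)
    intro p hp
    rw [hz p hp, getD_replicate _ _ _ hp]
  · right
    push_neg at hz
    obtain ⟨a, ⟨han, hva0⟩, hminp⟩ := exists_least hz
    have hmin : ∀ q, q < a → x.getD q 0 = 0 := by
      intro q hq
      by_contra hq0
      exact hminp q hq ⟨by omega, hq0⟩
    have ha1 : 1 ≤ a := by
      rcases Nat.eq_zero_or_pos a with h | h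
      · exact absurd (h ▸ hx.2.1) hva0
      · exact h
    have hva : x.getD a 0 = 1 := by
      have hb := hx.2.2 a ha1 han
      rw [asc_take _ _ (le_of_lt han)] at hb
      have hc : Casc x (a - 1) ≤ 0 := by
        apply Casc_le x _ 0 0
        intro j hj hasc
        rw [hmin j (by omega), hmin (j+1) (by omega)] at hasc
        omega
      omega
    by_cases h2 : ∀ p, p < x.length → x.getD p 0 ≤ 1
    · -- no value ≥ 2 : forms LB or LA with k = 1
      by_cases he : ∃ q, a < q ∧ q < x.length ∧ x.getD q 0 = 0
      · -- there is a zero after a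
        obtain ⟨e, ⟨hae, hen, hve⟩, heminp⟩ := exists_least he
        have hemin : ∀ q, a < q → q < e → x.getD q 0 = 1 := by
          intro q hq1 hq2
          have hne0 : x.getD q 0 ≠ 0 := by
            intro h0
            exact heminp q hq2 ⟨hq1, by omega, h0⟩
          have := h2 q (by omega)
          omega
        have hafter : ∀ q, e < q → q < x.length → x.getD q 0 = 0 := by
          intro q hq1 hq2
          by_contra h0
          have hvq : x.getD q 0 = 1 := by have := h2 q hq2; omega
          apply hnp (a-1) a e q (by omega) (by omega) hq1 hq2
          rw [hmin (a-1) (by omega), hva, hve, hvq]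
          unfold Fcond
          exact ⟨by omega, Or.inl ⟨rfl, by omega⟩⟩
        right
        refine ⟨a, e - a, x.length - e, ha1, by omega, by omega, by omega, ?_⟩
        apply eq_of_getD _ _ (by rw [length_LB]; omega)
        intro p hp
        rw [getD_LB _ _ _ _ (by omega)]
        split_ifs with g1 g2
        · exact hmin p g1
        · rcases Nat.lt_or_ge p a with h | h
          · omega
          · rcases Nat.eq_or_lt_of_le h with h | h
            · rw [← h]; exact hva
            · exact hemin p h (by omega)
        · rcases Nat.eq_or_lt_of_le (show e ≤ p by omega) with h | h
          · rw [← h]; exact hve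
          · exact hafter p h (by omega)
      · -- all ones after a : LA a 1 (n - a - 1)
        push_neg at he
        left
        refine ⟨a, 1, x.length - a - 1, ha1, le_refl 1, by omega, ?_⟩
        apply eq_of_getD _ _ (by rw [length_LA]; omega)
        intro p hp
        rw [getD_LA _ _ _ _ (by omega)]
        split_ifs with g1 g2
        · exact hmin p g1
        · have : p = a := by omega
          rw [this, hva]; omega
        · have hpa : a < p := by omega
          have := he p hpa (by omega)
          have := h2 p (by omega)
          omega
    · -- some value ≥ 2
      push_neg at h2
      have hex2 : ∃ p, p < x.length ∧ 2 ≤ x.getD p 0 := by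
        obtain ⟨p, hp1, hp2⟩ := h2
        exact ⟨p, hp1, by omega⟩
      obtain ⟨m, ⟨hmn, hvm2⟩, hmminp⟩ := exists_least hex2
      have hmmin : ∀ q, q < m → q < x.length → x.getD q 0 ≤ 1 := by
        intro q hq hqn
        by_contra h0
        exact hmminp q hq ⟨hqn, by omega⟩
      have hma : a < m := by
        rcases Nat.lt_trichotomy m a with h | h | h
        · have := hmin m h; omega
        · rw [h] at hvm2; omega
        · exact h
      have hm1 : m = a + 1 := by
        by_contra h0
        have hq : a + 1 < m := by omega
        have hvq := hmmin (a+1) hq (by omega)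
        apply hnp (a-1) a (a+1) m (by omega) (by omega) hq hmn
        rw [hmin (a-1) (by omega), hva]
        unfold Fcond
        refine ⟨by omega, ?_⟩
        rcases Nat.lt_or_ge (x.getD (a+1) 0) 1 with h | h
        · exact Or.inl ⟨by omega, by omega⟩
        · exact Or.inr (Or.inl ⟨by omega, by omega⟩)
      have hvm : x.getD m 0 = 2 := by
        have hb := hx.2.2 m (by omega) hmn
        rw [asc_take _ _ (le_of_lt hmn)] at hb
        have hc : Casc x (m - 1) ≤ 1 := by
          apply Casc_le x _ (a-1) 1
          intro j hj hasc
          rcases Nat.lt_or_ge j (a-1) with h | h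
          · rw [hmin j (by omega), hmin (j+1) (by omega)] at hasc
            omega
          · omega
        omega
      -- main induction: shape up to q
      have main : ∀ q, a + 1 ≤ q → q < x.length → ∃ t, a + 1 ≤ t ∧ t ≤ q ∧
          (∀ r, a ≤ r → r ≤ t → x.getD r 0 = r - a + 1) ∧
          (∀ r, t ≤ r → r ≤ q → x.getD r 0 = t - a + 1) := by
        intro q
        induction q with
        | zero => omega
        | succ q ih =>
          intro hq1 hq2
          rcases Nat.eq_or_lt_of_le hq1 with hbase | hstep
          · -- q + 1 = a + 1, base case
            refine ⟨a + 1, le_refl _, by omega, ?_, ?_⟩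
            · intro r hr1 hr2
              rcases Nat.eq_or_lt_of_le hr1 with h | h
              · rw [← h, hva]; omega
              · have : r = a + 1 := by omega
                rw [this, show a + 1 = m from hm1.symm, hvm]; omega
            · intro r hr1 hr2
              have : r = a + 1 := by omega
              rw [this, show a + 1 = m from hm1.symm, hvm]; omega
          · obtain ⟨t, ht1, ht2, hrun, hflat⟩ := ih (by omega) (by omega)
            have hK2 : 2 ≤ t - a + 1 := by omega
            have hvt : x.getD t 0 = t - a + 1 := hflat t (le_refl _) ht2
            -- ascent bound for w = x.getD (q+1) 0
            have hw : x.getD (q+1) 0 ≤ 1 + (t - a + 1) := by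
              have hb := hx.2.2 (q+1) (by omega) hq2
              rw [asc_take _ _ (by omega)] at hb
              have hc : Casc x (q + 1 - 1) ≤ t - a + 1 := by
                apply Casc_le x _ (a-1) (t - a + 1)
                intro j hj hasc
                constructor
                · by_contra h0
                  rw [hmin j (by omega), hmin (j+1) (by omega)] at hasc
                  omega
                · by_contra h0
                  have hjt : t ≤ j := by omega
                  rw [hflat j hjt (by omega), hflat (j+1) (by omega) (by omega)] at hasc
                  omega
              omega
            rcases Nat.lt_trichotomy (x.getD (q+1) 0) (t - a + 1) with hlt | heq | hgt
            · -- w < K : contradiction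
              exfalso
              rcases Nat.lt_or_ge (x.getD (q+1) 0) 2 with hsmall | hbig
              · -- w = 0 or 1
                apply hnp (a-1) a (a+1) (q+1) (by omega) (by omega) (by omega) hq2
                rw [hmin (a-1) (by omega), hva, hrun (a+1) (by omega) (by omega)]
                unfold Fcond
                refine ⟨by omega, Or.inr (Or.inr ⟨by omega, by omega⟩)⟩
              · -- 2 ≤ w < K
                have hww : a + x.getD (q+1) 0 - 2 < a + x.getD (q+1) 0 - 1 := by omega
                apply hnp (a + x.getD (q+1) 0 - 2) (a + x.getD (q+1) 0 - 1) t (q+1)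
                  hww (by omega) (by omega) hq2
                rw [hrun (a + x.getD (q+1) 0 - 2) (by omega) (by omega),
                  hrun (a + x.getD (q+1) 0 - 1) (by omega) (by omega), hvt]
                unfold Fcond
                refine ⟨by omega, Or.inr (Or.inr ⟨by omega, Or.inr (by omega)⟩)⟩
            · -- w = K : flat extends
              refine ⟨t, ht1, by omega, hrun, ?_⟩
              intro r hr1 hr2
              rcases Nat.lt_or_ge r (q+1) with h | h
              · exact hflat r hr1 (by omega)
              · have : r = q + 1 := by omega
                rw [this]; exact heq
            · -- w > K : must be K + 1 and t = q
              have hweq : x.getD (q+1) 0 = (t - a + 1) + 1 := by omega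
              have htq : t = q := by
                by_contra h0
                have htq : t < q := by omega
                apply hnp (t-1) t (t+1) (q+1) (by omega) (by omega) (by omega) hq2
                rw [hrun (t-1) (by omega) (by omega), hvt,
                  hflat (t+1) (by omega) (by omega), hweq]
                unfold Fcond
                refine ⟨by omega, Or.inr (Or.inl ⟨by omega, by omega⟩)⟩
              refine ⟨q + 1, by omega, le_refl _, ?_, ?_⟩
              · intro r hr1 hr2
                rcases Nat.lt_or_ge r (q+1) with h | h
                · exact hrun r hr1 (by omega)
                · have : r = q + 1 := by omega
                  rw [this, hweq]; omega
              · intro r hr1 hr2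
                have : r = q + 1 := by omega
                rw [this, hweq]; omega
      obtain ⟨t, ht1, ht2, hrun, hflat⟩ := main (x.length - 1) (by omega) (by omega)
      left
      refine ⟨a, t - a + 1, x.length - 1 - t, ha1, by omega, by omega, ?_⟩
      apply eq_of_getD _ _ (by rw [length_LA]; omega)
      intro p hp
      rw [getD_LA _ _ _ _ (by omega)]
      split_ifs with g1 g2
      · exact hmin p g1
      · have := hrun p (by omega) (by omega)
        omega
      · have := hflat p (by omega) (by omega)
        omega

lemma LA_eq_LA (a k c a' k' c' : ℕ) (ha : 1 ≤ a) (hk : 1 ≤ k) (ha' : 1 ≤ a') (hk' : 1 ≤ k')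
    (hs : a + k + c = a' + k' + c') (h : LA a k c = LA a' k' c') :
    a = a' ∧ k = k' ∧ c = c' := by
  have key : ∀ p, p < a + k + c →
      (if p < a then 0 else if p < a + k then p - a + 1 else k) =
      (if p < a' then 0 else if p < a' + k' then p - a' + 1 else k') := by
    intro p hp
    rw [← getD_LA a k c p hp, ← getD_LA a' k' c' p (by omega), h]
  have haa : a = a' := by
    by_contra hne
    rcases Nat.lt_or_ge a a' with hlt | hge
    · have hx := key a (by omega)
      split_ifs at hx <;> first | exact hx.elim | omega
    · have hx := key a' (by omega)
      split_ifs at hx <;> first | exact hx.elim | omega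
  have hkk : k = k' := by
    by_contra hne
    rcases Nat.lt_or_ge k k' with hlt | hge
    · have hx := key (a + k) (by omega)
      split_ifs at hx <;> first | exact hx.elim | omega
    · have hx := key (a' + k') (by omega)
      split_ifs at hx <;> first | exact hx.elim | omega
  exact ⟨haa, hkk, by omega⟩

lemma LA_ne_LB (a k c a' b' c' : ℕ) (ha : 1 ≤ a) (hk : 1 ≤ k) (ha' : 1 ≤ a')
    (hb' : 1 ≤ b') (hc' : 1 ≤ c') (hs : a + k + c = a' + b' + c') :
    LA a k c ≠ LB a' b' c' := by
  intro h
  have key : ∀ p, p < a + k + c →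
      (if p < a then 0 else if p < a + k then p - a + 1 else k) =
      (if p < a' then 0 else if p < a' + b' then 1 else 0) := by
    intro p hp
    rw [← getD_LA a k c p hp, ← getD_LB a' b' c' p (by omega), h]
  have haa : a = a' := by
    by_contra hne
    rcases Nat.lt_or_ge a a' with hlt | hge
    · have hx := key a (by omega)
      split_ifs at hx <;> first | exact hx.elim | omega
    · have hx := key a' (by omega)
      split_ifs at hx <;> first | exact hx.elim | omega
  have hx := key (a' + b') (by omega)
  split_ifs at hx <;> first | exact hx.elim | omega

lemma LB_eq_LB (a b c a' b' c' : ℕ) (ha : 1 ≤ a) (hb : 1 ≤ b) (hc : 1 ≤ c)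
    (ha' : 1 ≤ a') (hb' : 1 ≤ b') (hc' : 1 ≤ c')
    (hs : a + b + c = a' + b' + c') (h : LB a b c = LB a' b' c') :
    a = a' ∧ b = b' ∧ c = c' := by
  have key : ∀ p, p < a + b + c →
      (if p < a then 0 else if p < a + b then 1 else 0) =
      (if p < a' then 0 else if p < a' + b' then 1 else 0) := by
    intro p hp
    rw [← getD_LB a b c p hp, ← getD_LB a' b' c' p (by omega), h]
  have haa : a = a' := by
    by_contra hne
    rcases Nat.lt_or_ge a a' with hlt | hge
    · have hx := key a (by omega)
      split_ifs at hx <;> first | exact hx.elim | omega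
    · have hx := key a' (by omega)
      split_ifs at hx <;> first | exact hx.elim | omega
  have hbb : b = b' := by
    by_contra hne
    rcases Nat.lt_or_ge b b' with hlt | hge
    · have hx := key (a + b) (by omega)
      split_ifs at hx <;> first | exact hx.elim | omega
    · have hx := key (a' + b') (by omega)
      split_ifs at hx <;> first | exact hx.elim | omega
  exact ⟨haa, hbb, by omega⟩

/-- the parametrization of the non-constant avoiders -/
def hfun (n : ℕ) (ij : ℕ × ℕ) : List ℕ :=
  if ij.1 + ij.2 ≤ n - 2 then LA (ij.1 + 1) (ij.2 + 1) (n - 2 - ij.1 - ij.2)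
  else LB (n - 1 - ij.2) (ij.1 + ij.2 - (n - 2)) (n - 1 - ij.1)


theorem stmt_17 (n : ℕ) (hn : 1 ≤ n) :
    Nat.card {x : List ℕ // x.length = n ∧ IsAscSeq x ∧ Avoids [0, 1, 0, 1] x ∧ Avoids [0, 1, 0, 2] x ∧ Avoids [0, 1, 1, 2] x ∧ Avoids [0, 1, 2, 0] x ∧ Avoids [0, 1, 2, 1] x} = (n - 1) ^ 2 + 1 := by

  classical
  set D : Finset (ℕ × ℕ) := Finset.range (n-1) ×ˢ Finset.range (n-1) with hD
  set U : Finset (List ℕ) := insert (List.replicate n 0) (D.image (hfun n)) with hU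
  have hmemD : ∀ ij : ℕ × ℕ, ij ∈ D ↔ ij.1 < n - 1 ∧ ij.2 < n - 1 := by
    intro ij
    rw [hD, Finset.mem_product, Finset.mem_range, Finset.mem_range]
  have hiff : ∀ x : List ℕ,
      (x.length = n ∧ IsAscSeq x ∧ Avoids [0, 1, 0, 1] x ∧ Avoids [0, 1, 0, 2] x ∧
        Avoids [0, 1, 1, 2] x ∧ Avoids [0, 1, 2, 0] x ∧ Avoids [0, 1, 2, 1] x) ↔ x ∈ U := by
    intro x
    constructor
    · rintro ⟨hlen, hasc, hav⟩
      have hnp : NoPat x := (noPat_iff x).mpr hav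
      rcases classify x hasc hnp with hzero | ⟨a, k, c, ha, hk, hsum, hxeq⟩ |
        ⟨a, b, c, ha, hb, hc, hsum, hxeq⟩
      · rw [hU]
        exact Finset.mem_insert.mpr (Or.inl (by rw [hzero, hlen]))
      · rw [hlen] at hsum
        have hn2 : 2 ≤ n := by omega
        rw [hU]
        apply Finset.mem_insert.mpr
        right
        apply Finset.mem_image.mpr
        refine ⟨(a - 1, k - 1), (hmemD _).mpr ⟨by omega, by omega⟩, ?_⟩
        rw [hfun]
        simp only
        rw [if_pos (by omega : a - 1 + (k - 1) ≤ n - 2)]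
        rw [show a - 1 + 1 = a by omega, show k - 1 + 1 = k by omega,
          show n - 2 - (a - 1) - (k - 1) = c by omega]
        exact hxeq.symm
      · rw [hlen] at hsum
        have hn3 : 3 ≤ n := by omega
        rw [hU]
        apply Finset.mem_insert.mpr
        right
        apply Finset.mem_image.mpr
        refine ⟨(a + b - 1, n - 1 - a), (hmemD _).mpr ⟨by omega, by omega⟩, ?_⟩
        rw [hfun]
        simp only
        rw [if_neg (by omega : ¬ (a + b - 1 + (n - 1 - a) ≤ n - 2))]
        rw [show n - 1 - (n - 1 - a) = a by omega,
          show a + b - 1 + (n - 1 - a) - (n - 2) = b by omega,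
          show n - 1 - (a + b - 1) = c by omega]
        exact hxeq.symm
    · intro hx
      rw [hU, Finset.mem_insert] at hx
      rcases hx with hx | hx
      · subst hx
        refine ⟨by simp, isAscSeq_zeros n hn, (noPat_iff _).mp (noPat_zeros n)⟩
      · obtain ⟨⟨i, j⟩, hmem, rfl⟩ := Finset.mem_image.mp hx
        obtain ⟨hi, hj⟩ := (hmemD _).mp hmem
        have hn2 : 2 ≤ n := by omega
        rw [hfun]
        simp only
        by_cases hcond : i + j ≤ n - 2
        · rw [if_pos hcond]
          refine ⟨by rw [length_LA]; omega, isAscSeq_LA _ _ _ (by omega),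
            (noPat_iff _).mp (noPat_LA _ _ _)⟩
        · rw [if_neg hcond]
          refine ⟨by rw [length_LB]; omega, isAscSeq_LB _ _ _ (by omega),
            (noPat_iff _).mp (noPat_LB _ _ _)⟩
  rw [Nat.card_congr (Equiv.subtypeEquivRight hiff), Nat.card_eq_finsetCard]
  have hnotmem : List.replicate n 0 ∉ D.image (hfun n) := by
    intro hx
    obtain ⟨⟨i, j⟩, hmem, heq⟩ := Finset.mem_image.mp hx
    obtain ⟨hi, hj⟩ := (hmemD _).mp hmem
    have hn2 : 2 ≤ n := by omega
    rw [hfun] at heq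
    simp only at heq
    by_cases hcond : i + j ≤ n - 2
    · rw [if_pos hcond] at heq
      have h1 := congrArg (fun t => t.getD (i+1) 0) heq
      rw [getD_LA _ _ _ _ (by omega), getD_replicate _ _ _ (by omega)] at h1
      split_ifs at h1 <;> first | exact h1.elim | omega
    · rw [if_neg hcond] at heq
      have h1 := congrArg (fun t => t.getD (n - 1 - j) 0) heq
      rw [getD_LB _ _ _ _ (by omega), getD_replicate _ _ _ (by omega)] at h1
      split_ifs at h1 <;> first | exact h1.elim | omega
  have hinj : Set.InjOn (hfun n) D := by
    rintro ⟨i, j⟩ hm ⟨i', j'⟩ hm' heq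
    obtain ⟨hi, hj⟩ := (hmemD _).mp hm
    obtain ⟨hi', hj'⟩ := (hmemD _).mp hm'
    have hn2 : 2 ≤ n := by omega
    rw [hfun, hfun] at heq
    simp only at heq
    by_cases c1 : i + j ≤ n - 2 <;> by_cases c2 : i' + j' ≤ n - 2
    · rw [if_pos c1, if_pos c2] at heq
      obtain ⟨e1, e2, _⟩ := LA_eq_LA _ _ _ _ _ _ (by omega) (by omega) (by omega) (by omega)
        (by omega) heq
      simp only [Prod.mk.injEq]
      omega
    · rw [if_pos c1, if_neg c2] at heq
      exact absurd heq (LA_ne_LB _ _ _ _ _ _ (by omega) (by omega) (by omega) (by omega)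
        (by omega) (by omega))
    · rw [if_neg c1, if_pos c2] at heq
      exact absurd heq.symm (LA_ne_LB _ _ _ _ _ _ (by omega) (by omega) (by omega) (by omega)
        (by omega) (by omega))
    · rw [if_neg c1, if_neg c2] at heq
      obtain ⟨e1, e2, _⟩ := LB_eq_LB _ _ _ _ _ _ (by omega) (by omega) (by omega) (by omega)
        (by omega) (by omega) (by omega) heq
      simp only [Prod.mk.injEq]
      omega
  rw [hU, Finset.card_insert_of_notMem hnotmem, Finset.card_image_of_injOn hinj, hD,
    Finset.card_product, Finset.card_range, sq]
end

section
/- Let x be a sequence of nonnegative integers that is a restricted growth function (i.e., for every k >= 1, the first occurrence of k in x is preceded by an occurrence of k-1). Then x contains the pattern 0121 if and only if x contains the pattern 021. -/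
/-- `x` is a restricted growth function: every occurrence of a value `k ≥ 1`
is preceded by an occurrence of `k - 1`. -/
def IsRGF (x : List ℕ) : Prop :=
  ∀ j, j < x.length → ∀ k, x.getD j 0 = k → 1 ≤ k → ∃ i < j, x.getD i 0 = k - 1

lemma rgf_reach (x : List ℕ) (hx : IsRGF x) :
    ∀ j, j < x.length → ∀ v, v < x.getD j 0 → ∃ i < j, x.getD i 0 = v := by
  intro j
  induction j using Nat.strong_induction_on with
  | _ j ih =>
    intro hj v hv
    obtain ⟨i, hij, hi⟩ := hx j hj (x.getD j 0) rfl (by omega)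
    rcases eq_or_lt_of_le (Nat.le_sub_one_of_lt hv) with h | h
    · exact ⟨i, hij, by omega⟩
    · obtain ⟨i', hi', hv'⟩ := ih i hij (lt_trans hij hj) v (by omega)
      exact ⟨i', lt_trans hi' hij, hv'⟩

lemma sublist_of_idx4 (x : List ℕ) {q1 q2 q3 q4 : ℕ} (h12 : q1 < q2) (h23 : q2 < q3)
    (h34 : q3 < q4) (h4 : q4 < x.length) :
    List.Sublist [x.getD q1 0, x.getD q2 0, x.getD q3 0, x.getD q4 0] x := by
  rw [List.sublist_iff_exists_fin_orderEmbedding_get_eq]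
  have h1 : q1 < x.length := by omega
  have h2 : q2 < x.length := by omega
  have h3 : q3 < x.length := by omega
  have hsm : StrictMono (fun i : Fin 4 => (![⟨q1, h1⟩, ⟨q2, h2⟩, ⟨q3, h3⟩, ⟨q4, h4⟩] : Fin 4 → Fin x.length) i) := by
    intro a b hab
    fin_cases a <;> fin_cases b <;> simp_all [Fin.lt_def] <;> omega
  refine ⟨OrderEmbedding.ofStrictMono _ hsm, ?_⟩
  intro ix
  fin_cases ix <;> simp [OrderEmbedding.ofStrictMono, List.getD_eq_getElem, h1, h2, h3, h4, List.get_eq_getElem] <;> rfl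

theorem stmt_18 (x : List ℕ) (hx : IsRGF x) :
    Contains [0, 1, 2, 1] x ↔ Contains [0, 2, 1] x := by
  constructor
  · rintro ⟨y, hsub, hlen, h⟩
    obtain ⟨a, b, c, d, rfl⟩ : ∃ a b c d, y = [a, b, c, d] := by
      rcases y with _ | ⟨a, _ | ⟨b, _ | ⟨c, _ | ⟨d, _ | ⟨e, t⟩⟩⟩⟩⟩ <;> simp_all
    have had : a < d := by have := h 0 3 (by norm_num) (by norm_num); simp at this; omega
    have hdc : d < c := by have := h 3 2 (by norm_num) (by norm_num); simp at this; omega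
    refine ⟨[a, c, d], ?_, rfl, ?_⟩
    · refine List.Sublist.trans ?_ hsub
      exact List.Sublist.cons₂ a ((List.sublist_cons_self b [c, d]).trans (List.Sublist.refl _)) |>.trans (List.Sublist.refl _)
    · intro i j hi hj
      have hi' : i < 3 := by simpa using hi
      have hj' : j < 3 := by simpa using hj
      interval_cases i <;> interval_cases j <;> simp <;> omega
  · rintro ⟨z, hsub, hlen, h⟩
    obtain ⟨a, b, c, rfl⟩ : ∃ a b c, z = [a, b, c] := by
      rcases z with _ | ⟨a, _ | ⟨b, _ | ⟨c, _ | ⟨d, t⟩⟩⟩⟩ <;> simp_all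
    have hac : a < c := by have := h 0 2 (by norm_num) (by norm_num); simp at this; omega
    have hcb : c < b := by have := h 2 1 (by norm_num) (by norm_num); simp at this; omega
    obtain ⟨f, hf⟩ := List.sublist_iff_exists_fin_orderEmbedding_get_eq.mp hsub
    have l3 : ([a,b,c] : List ℕ).length = 3 := rfl
    set i1 := (f ⟨0, by omega⟩ : Fin x.length) with hi1
    set i2 := (f ⟨1, by omega⟩ : Fin x.length) with hi2
    set i3 := (f ⟨2, by omega⟩ : Fin x.length) with hi3
    have hv1 : x.getD (i1 : ℕ) 0 = a := by
      rw [List.getD_eq_getElem _ _ i1.isLt, hi1]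
      exact (hf ⟨0, by omega⟩).symm
    have hv2 : x.getD (i2 : ℕ) 0 = b := by
      rw [List.getD_eq_getElem _ _ i2.isLt, hi2]
      exact (hf ⟨1, by omega⟩).symm
    have hv3 : x.getD (i3 : ℕ) 0 = c := by
      rw [List.getD_eq_getElem _ _ i3.isLt, hi3]
      exact (hf ⟨2, by omega⟩).symm
    have h12 : (i1 : ℕ) < i2 := f.strictMono (show (⟨0, by omega⟩ : Fin 3) < ⟨1, by omega⟩ by simp [Fin.lt_def])
    have h23 : (i2 : ℕ) < i3 := f.strictMono (show (⟨1, by omega⟩ : Fin 3) < ⟨2, by omega⟩ by simp [Fin.lt_def])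
    -- find occurrence of c before i2
    obtain ⟨m, hm2, hmc⟩ := rgf_reach x hx i2 i2.isLt c (by omega)
    have key : ∃ q1 q2, q1 < q2 ∧ q2 < (i2 : ℕ) ∧ x.getD q1 0 = a ∧ x.getD q2 0 = c := by
      rcases lt_or_ge (i1 : ℕ) m with hlt | hle
      · exact ⟨i1, m, hlt, hm2, hv1, hmc⟩
      · have hne : m ≠ (i1 : ℕ) := by intro he; rw [he, hv1] at hmc; omega
        have hmlt : m < (i1 : ℕ) := lt_of_le_of_ne hle hne
        obtain ⟨m', hm', hm'a⟩ := rgf_reach x hx m (lt_trans hm2 i2.isLt) a (by omega)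
        exact ⟨m', m, hm', hm2, hm'a, hmc⟩
    obtain ⟨q1, q2, hq12, hq2, hqa, hqc⟩ := key
    refine ⟨[x.getD q1 0, x.getD q2 0, x.getD (i2:ℕ) 0, x.getD (i3:ℕ) 0], sublist_of_idx4 x hq12 hq2 h23 i3.isLt, rfl, ?_⟩
    rw [hqa, hqc, hv2, hv3]
    intro i j hi hj
    have hi' : i < 4 := by simpa using hi
    have hj' : j < 4 := by simpa using hj
    interval_cases i <;> interval_cases j <;> simp <;> omega
end

section
/- Let x be a sequence of nonnegative integers that is a restricted growth function. Then x contains the pattern 0101 if and only if x contains the pattern 101; similarly x contains 0102 if and only if it contains 102, and x contains 0120 if and only if it contains 120. -/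
/-- If `a ≥ 1` and `a :: t` is a subsequence of an RGF `x`, then we can prepend an
occurrence of `a - 1`. -/
lemma rgf_step (x : List ℕ) (hx : IsRGF x) (a : ℕ) (t : List ℕ) (ha : 1 ≤ a)
    (h : (a :: t).Sublist x) : ((a - 1) :: a :: t).Sublist x := by
  rw [List.cons_sublist_iff] at h
  obtain ⟨r₁, r₂, rfl, hmem, ht⟩ := h
  obtain ⟨u, w, rfl⟩ := List.append_of_mem hmem
  have hj : ((u ++ a :: w) ++ r₂).getD u.length 0 = a := by
    rw [List.getD_append _ _ _ _ (by simp), List.getD_append_right _ _ _ _ (le_refl _)]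
    simp [List.getD]
  obtain ⟨i, hi, hval⟩ := hx u.length (by simp) a hj ha
  have hmem' : (a - 1) ∈ u := by
    have heq : ((u ++ a :: w) ++ r₂).getD i 0 = u.getD i 0 := by
      rw [List.getD_append _ _ _ _ (by simp; omega), List.getD_append _ _ _ _ hi]
    rw [heq] at hval
    rw [← hval, List.getD_eq_getElem _ _ hi]
    exact List.getElem_mem hi
  obtain ⟨u1, u2, rfl⟩ := List.append_of_mem hmem'
  have key : ((a-1) :: a :: t).Sublist ((a-1) :: (u2 ++ (a :: (w ++ r₂)))) :=
    List.Sublist.cons₂ _ (List.sublist_append_of_sublist_right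
      (List.Sublist.cons₂ a (ht.trans (List.sublist_append_right w r₂))))
  have hx2 : ((u1 ++ (a-1) :: u2) ++ a :: w) ++ r₂
      = u1 ++ ((a-1) :: (u2 ++ (a :: (w ++ r₂)))) := by simp
  rw [hx2]
  exact List.sublist_append_of_sublist_right key

/-- If `v < a` and `a :: t` is a subsequence of an RGF `x`, then we can prepend an
occurrence of `v`. -/
lemma rgf_ins (x : List ℕ) (hx : IsRGF x) (a : ℕ) : ∀ (v : ℕ) (t : List ℕ), v < a →
    (a :: t).Sublist x → (v :: a :: t).Sublist x := by
  induction a with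
  | zero => omega
  | succ n ih =>
    intro v t hv h
    have h1 : (n :: (n+1) :: t).Sublist x := rgf_step x hx (n+1) t (by omega) h
    rcases Nat.lt_or_ge v n with hvn | hvn
    · exact (List.Sublist.cons₂ _ (List.sublist_cons_self _ _)).trans
        (ih v ((n+1) :: t) hvn h1)
    · have hv' : v = n := by omega
      subst hv'; exact h1

theorem stmt_19 (x : List ℕ) (hx : IsRGF x) :
    (Contains [0, 1, 0, 1] x ↔ Contains [1, 0, 1] x) ∧
    (Contains [0, 1, 0, 2] x ↔ Contains [1, 0, 2] x) ∧
    (Contains [0, 1, 2, 0] x ↔ Contains [1, 2, 0] x) := by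
  refine ⟨⟨?_, ?_⟩, ⟨?_, ?_⟩, ⟨?_, ?_⟩⟩ <;> rintro ⟨y, hs, hl, hr⟩
  · -- 0101 → 101
    obtain ⟨a, b, c, d, rfl⟩ : ∃ a b c d, y = [a, b, c, d] := by
      rcases y with _ | ⟨a, _ | ⟨b, _ | ⟨c, _ | ⟨d, _ | ⟨e, y⟩⟩⟩⟩⟩ <;> simp_all
    have h12 := hr 1 2 (by norm_num) (by norm_num)
    have h21 := hr 2 1 (by norm_num) (by norm_num)
    have h13 := hr 1 3 (by norm_num) (by norm_num)
    have h31 := hr 3 1 (by norm_num) (by norm_num)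
    have h23 := hr 2 3 (by norm_num) (by norm_num)
    have h32 := hr 3 2 (by norm_num) (by norm_num)
    simp [List.getD] at h12 h21 h13 h31 h23 h32
    refine ⟨[b, c, d], (List.sublist_cons_self a _).trans hs, by simp, ?_⟩
    intro i j hi hj
    simp only [List.length_cons, List.length_nil] at hi hj
    interval_cases i <;> interval_cases j <;> simp [List.getD] <;> omega
  · -- 101 → 0101
    obtain ⟨a, b, c, rfl⟩ : ∃ a b c, y = [a, b, c] := by
      rcases y with _ | ⟨a, _ | ⟨b, _ | ⟨c, _ | ⟨d, y⟩⟩⟩⟩ <;> simp_all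
    have h01 := hr 0 1 (by norm_num) (by norm_num)
    have h10 := hr 1 0 (by norm_num) (by norm_num)
    have h02 := hr 0 2 (by norm_num) (by norm_num)
    have h20 := hr 2 0 (by norm_num) (by norm_num)
    have h12 := hr 1 2 (by norm_num) (by norm_num)
    have h21 := hr 2 1 (by norm_num) (by norm_num)
    simp [List.getD] at h01 h10 h02 h20 h12 h21
    refine ⟨[b, a, b, c], rgf_ins x hx a b [b, c] h10 hs, by simp, ?_⟩
    intro i j hi hj
    simp only [List.length_cons, List.length_nil] at hi hj
    interval_cases i <;> interval_cases j <;> simp [List.getD] <;> omega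
  · -- 0102 → 102
    obtain ⟨a, b, c, d, rfl⟩ : ∃ a b c d, y = [a, b, c, d] := by
      rcases y with _ | ⟨a, _ | ⟨b, _ | ⟨c, _ | ⟨d, _ | ⟨e, y⟩⟩⟩⟩⟩ <;> simp_all
    have h12 := hr 1 2 (by norm_num) (by norm_num)
    have h21 := hr 2 1 (by norm_num) (by norm_num)
    have h13 := hr 1 3 (by norm_num) (by norm_num)
    have h31 := hr 3 1 (by norm_num) (by norm_num)
    have h23 := hr 2 3 (by norm_num) (by norm_num)
    have h32 := hr 3 2 (by norm_num) (by norm_num)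
    simp [List.getD] at h12 h21 h13 h31 h23 h32
    refine ⟨[b, c, d], (List.sublist_cons_self a _).trans hs, by simp, ?_⟩
    intro i j hi hj
    simp only [List.length_cons, List.length_nil] at hi hj
    interval_cases i <;> interval_cases j <;> simp [List.getD] <;> omega
  · -- 102 → 0102
    obtain ⟨a, b, c, rfl⟩ : ∃ a b c, y = [a, b, c] := by
      rcases y with _ | ⟨a, _ | ⟨b, _ | ⟨c, _ | ⟨d, y⟩⟩⟩⟩ <;> simp_all
    have h01 := hr 0 1 (by norm_num) (by norm_num)
    have h10 := hr 1 0 (by norm_num) (by norm_num)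
    have h02 := hr 0 2 (by norm_num) (by norm_num)
    have h20 := hr 2 0 (by norm_num) (by norm_num)
    have h12 := hr 1 2 (by norm_num) (by norm_num)
    have h21 := hr 2 1 (by norm_num) (by norm_num)
    simp [List.getD] at h01 h10 h02 h20 h12 h21
    refine ⟨[b, a, b, c], rgf_ins x hx a b [b, c] h10 hs, by simp, ?_⟩
    intro i j hi hj
    simp only [List.length_cons, List.length_nil] at hi hj
    interval_cases i <;> interval_cases j <;> simp [List.getD] <;> omega
  · -- 0120 → 120
    obtain ⟨a, b, c, d, rfl⟩ : ∃ a b c d, y = [a, b, c, d] := by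
      rcases y with _ | ⟨a, _ | ⟨b, _ | ⟨c, _ | ⟨d, _ | ⟨e, y⟩⟩⟩⟩⟩ <;> simp_all
    have h12 := hr 1 2 (by norm_num) (by norm_num)
    have h21 := hr 2 1 (by norm_num) (by norm_num)
    have h13 := hr 1 3 (by norm_num) (by norm_num)
    have h31 := hr 3 1 (by norm_num) (by norm_num)
    have h23 := hr 2 3 (by norm_num) (by norm_num)
    have h32 := hr 3 2 (by norm_num) (by norm_num)
    simp [List.getD] at h12 h21 h13 h31 h23 h32
    refine ⟨[b, c, d], (List.sublist_cons_self a _).trans hs, by simp, ?_⟩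
    intro i j hi hj
    simp only [List.length_cons, List.length_nil] at hi hj
    interval_cases i <;> interval_cases j <;> simp [List.getD] <;> omega
  · -- 120 → 0120
    obtain ⟨a, b, c, rfl⟩ : ∃ a b c, y = [a, b, c] := by
      rcases y with _ | ⟨a, _ | ⟨b, _ | ⟨c, _ | ⟨d, y⟩⟩⟩⟩ <;> simp_all
    have h01 := hr 0 1 (by norm_num) (by norm_num)
    have h10 := hr 1 0 (by norm_num) (by norm_num)
    have h02 := hr 0 2 (by norm_num) (by norm_num)
    have h20 := hr 2 0 (by norm_num) (by norm_num)
    have h12 := hr 1 2 (by norm_num) (by norm_num)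
    have h21 := hr 2 1 (by norm_num) (by norm_num)
    simp [List.getD] at h01 h10 h02 h20 h12 h21
    refine ⟨[c, a, b, c], rgf_ins x hx a c [b, c] h20 hs, by simp, ?_⟩
    intro i j hi hj
    simp only [List.length_cons, List.length_nil] at hi hj
    interval_cases i <;> interval_cases j <;> simp [List.getD] <;> omega
end
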